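/- arXiv:math/0604088 — 6 statements merged into one kernel-verified Lean document; each statement's English description precedes it below -/
import Mathlib

section
/- Let G be a finite graph on more than one vertex, possibly with loops, and write its two-variable interlace polynomial as q(G;x,y) = Σ_{i,j≥0} a_{ij} x^i y^j. Then a_{10} = −a_{01}; that is, the coefficient of the monomial x^1 y^0 in q(G;x,y) is the negative of the coefficient of the monomial x^0 y^1. -/
open Polynomial

universe u

variable {V : Type u}

/-- The `F_2`-rank of the adjacency matrix of the subgraph of `G` induced by `S`. -/
noncomputable def rankIn [Fintype V] (G : SimpleGraph V) (S : Finset V) : ℕ :=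
  letI := Classical.decRel G.Adj
  ((SimpleGraph.adjMatrix (ZMod 2) G).submatrix
    (fun i : S => (i : V)) (fun i : S => (i : V))).rank

/-- The vertex-nullity interlace polynomial `q_N(G;x) = Σ_{S ⊆ V} (x-1)^{n(G[S])}`. -/
noncomputable def qNull [Fintype V] (G : SimpleGraph V) : Polynomial ℤ :=
  ∑ S : Finset V, ((X : Polynomial ℤ) - 1) ^ (S.card - rankIn G S)

/-- The γ invariant: the coefficient of `x^1` in `q_N(G;x)`. -/
noncomputable def gammaInv [Fintype V] (G : SimpleGraph V) : ℤ :=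
  (qNull G).coeff 1

/-- The two-variable interlace polynomial, with `x = X 0`, `y = X 1`. -/
noncomputable def interlaceQ [Fintype V] (G : SimpleGraph V) : MvPolynomial (Fin 2) ℤ :=
  ∑ S : Finset V,
    (MvPolynomial.X 0 - 1) ^ (rankIn G S) * (MvPolynomial.X 1 - 1) ^ (S.card - rankIn G S)

/-- `x` is adjacent to `v` but not to `w` (and differs from both). -/
def adjOnly (G : SimpleGraph V) (v w x : V) : Prop :=
  x ≠ v ∧ x ≠ w ∧ G.Adj v x ∧ ¬ G.Adj w x

/-- `x` is adjacent to both `v` and `w` (and differs from both). -/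
def adjBoth (G : SimpleGraph V) (v w x : V) : Prop :=
  x ≠ v ∧ x ≠ w ∧ G.Adj v x ∧ G.Adj w x

def pivotToggleHalf (G : SimpleGraph V) (v w x y : V) : Prop :=
  (adjOnly G v w x ∧ adjOnly G w v y) ∨ (adjOnly G v w x ∧ adjBoth G v w y) ∨
    (adjOnly G w v x ∧ adjBoth G v w y)

/-- `x` and `y` lie in two distinct classes among `A_v`, `A_w`, `A_{vw}`. -/
def pivotToggle (G : SimpleGraph V) (v w x y : V) : Prop :=
  pivotToggleHalf G v w x y ∨ pivotToggleHalf G v w y x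

/-- The pivot `G^{vw}`: adjacency between vertices in distinct classes among
`A_v`, `A_w`, `A_{vw}` is toggled; all other adjacencies are unchanged. -/
def pivot (G : SimpleGraph V) (v w : V) : SimpleGraph V where
  Adj x y := x ≠ y ∧
    ((pivotToggle G v w x y ∧ ¬ G.Adj x y) ∨ (¬ pivotToggle G v w x y ∧ G.Adj x y))
  symm := by
    constructor
    intro x y h
    obtain ⟨hne, h⟩ := h
    have hsym : pivotToggle G v w y x ↔ pivotToggle G v w x y := by
      unfold pivotToggle; exact or_comm
    refine ⟨hne.symm, ?_⟩
    rcases h with ⟨ht, hna⟩ | ⟨ht, ha⟩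
    · exact Or.inl ⟨hsym.mpr ht, fun hyx => hna hyx.symm⟩
    · exact Or.inr ⟨fun hyx => ht (hsym.mp hyx), ha.symm⟩
  loopless := ⟨fun x h => h.1 rfl⟩

/-- Deleting the vertex `v`: the induced subgraph on `V \ {v}`. -/
def delVert (G : SimpleGraph V) (v : V) : SimpleGraph {x : V // x ≠ v} :=
  SimpleGraph.comap Subtype.val G

/-- The induced subgraph on a finite vertex subset. -/
def inducedF (G : SimpleGraph V) (s : Finset V) : SimpleGraph {x : V // x ∈ s} :=
  SimpleGraph.comap Subtype.val G

/-- Adding a new pendant vertex (`none`) attached to `u`. -/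
def addPendant (G : SimpleGraph V) (u : V) : SimpleGraph (Option V) :=
  SimpleGraph.fromRel (fun x y =>
    (x = none ∧ y = some u) ∨ ∃ a b, x = some a ∧ y = some b ∧ G.Adj a b)

/-- Adding a new false twin (`none`) of the vertex `v`. -/
def addFalseTwin (G : SimpleGraph V) (v : V) : SimpleGraph (Option V) :=
  SimpleGraph.fromRel (fun x y =>
    (∃ a, x = none ∧ y = some a ∧ G.Adj v a) ∨ ∃ a b, x = some a ∧ y = some b ∧ G.Adj a b)

/-- Adding a new true twin (`none`) of the vertex `v`. -/
def addTrueTwin (G : SimpleGraph V) (v : V) : SimpleGraph (Option V) :=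
  SimpleGraph.fromRel (fun x y =>
    (x = none ∧ y = some v) ∨ (∃ a, x = none ∧ y = some a ∧ G.Adj v a) ∨
      ∃ a b, x = some a ∧ y = some b ∧ G.Adj a b)
/-- `G` is a bipartite distance hereditary graph: obtainable (up to isomorphism) from a
one-vertex graph by adding pendant vertices and false twins of non-isolated vertices. -/
inductive IsBDH : {W : Type u} → SimpleGraph W → Prop
  | single : IsBDH (⊥ : SimpleGraph PUnit)
  | pendant {W : Type u} (G : SimpleGraph W) (u : W) : IsBDH G → IsBDH (addPendant G u)
  | falseTwin {W : Type u} (G : SimpleGraph W) (v : W) (hv : ∃ x, G.Adj v x) :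
      IsBDH G → IsBDH (addFalseTwin G v)
  | iso {W W' : Type u} (G : SimpleGraph W) (H : SimpleGraph W') :
      IsBDH G → G ≃g H → IsBDH H

/-- `DHConstruction G n` : `G` admits a DH construction sequence (up to isomorphism,
starting from a one-vertex graph, adding pendant vertices, false twins and true twins of
non-isolated vertices) with exactly `n` true twins. -/
inductive DHConstruction : {W : Type u} → SimpleGraph W → ℕ → Prop
  | single : DHConstruction (⊥ : SimpleGraph PUnit) 0
  | pendant {W : Type u} (G : SimpleGraph W) (u : W) {n : ℕ} :
      DHConstruction G n → DHConstruction (addPendant G u) n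
  | falseTwin {W : Type u} (G : SimpleGraph W) (v : W) (hv : ∃ x, G.Adj v x) {n : ℕ} :
      DHConstruction G n → DHConstruction (addFalseTwin G v) n
  | trueTwin {W : Type u} (G : SimpleGraph W) (v : W) (hv : ∃ x, G.Adj v x) {n : ℕ} :
      DHConstruction G n → DHConstruction (addTrueTwin G v) (n + 1)
  | iso {W W' : Type u} (G : SimpleGraph W) (H : SimpleGraph W') {n : ℕ} :
      DHConstruction G n → G ≃g H → DHConstruction H n

/-- The two-variable interlace polynomial of a graph (possibly with loops) encoded by its
symmetric adjacency matrix `A` over `F_2`, with `x = X 0`, `y = X 1`. -/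
noncomputable def interlaceQMat [Fintype V] (A : Matrix V V (ZMod 2)) :
    MvPolynomial (Fin 2) ℤ :=
  ∑ S : Finset V,
    (MvPolynomial.X 0 - 1) ^
        ((A.submatrix (fun i : S => (i : V)) (fun i : S => (i : V))).rank) *
      (MvPolynomial.X 1 - 1) ^
        (S.card - (A.submatrix (fun i : S => (i : V)) (fun i : S => (i : V))).rank)

section Aux

lemma finsupp_fin2_eq_single0 (u : Fin 2 →₀ ℕ) :
    u = Finsupp.single (0 : Fin 2) 1 ↔ u 0 = 1 ∧ u 1 = 0 := by
  constructor
  · rintro rfl; simp [Finsupp.single_apply]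
  · rintro ⟨h0, h1⟩
    ext i
    fin_cases i <;> simp [Finsupp.single_apply, h0, h1]

lemma finsupp_fin2_eq_single1 (u : Fin 2 →₀ ℕ) :
    u = Finsupp.single (1 : Fin 2) 1 ↔ u 0 = 0 ∧ u 1 = 1 := by
  constructor
  · rintro rfl; simp [Finsupp.single_apply]
  · rintro ⟨h0, h1⟩
    ext i
    fin_cases i <;> simp [Finsupp.single_apply, h0, h1]

lemma coeff_single0 (p : MvPolynomial (Fin 2) ℤ) :
    MvPolynomial.coeff (Finsupp.single (0 : Fin 2) 1) p =
      (MvPolynomial.eval₂ Polynomial.C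
        (fun i : Fin 2 => if i = 0 then (X : Polynomial ℤ) else 0) p).coeff 1 := by
  induction p using MvPolynomial.induction_on' with
  | add p q hp hq => simp [MvPolynomial.coeff_add, hp, hq]
  | monomial u a =>
      rw [MvPolynomial.eval₂_monomial, MvPolynomial.coeff_monomial]
      rw [Finsupp.prod_fintype _ _ (fun i => pow_zero _), Fin.prod_univ_two]
      norm_num
      by_cases h1 : u 1 = 0
      · rw [h1, pow_zero, mul_one, coeff_X_pow]
        by_cases h0 : u 0 = 1
        · rw [if_pos ((finsupp_fin2_eq_single0 u).2 ⟨h0, h1⟩), if_pos h0.symm, mul_one]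
        · rw [if_neg (fun h => h0 ((finsupp_fin2_eq_single0 u).1 h).1),
            if_neg (fun h => h0 h.symm), mul_zero]
      · rw [zero_pow h1, mul_zero, coeff_zero, mul_zero,
          if_neg (fun h => h1 ((finsupp_fin2_eq_single0 u).1 h).2)]

lemma coeff_single1 (p : MvPolynomial (Fin 2) ℤ) :
    MvPolynomial.coeff (Finsupp.single (1 : Fin 2) 1) p =
      (MvPolynomial.eval₂ Polynomial.C
        (fun i : Fin 2 => if i = 1 then (X : Polynomial ℤ) else 0) p).coeff 1 := by
  induction p using MvPolynomial.induction_on' with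
  | add p q hp hq => simp [MvPolynomial.coeff_add, hp, hq]
  | monomial u a =>
      rw [MvPolynomial.eval₂_monomial, MvPolynomial.coeff_monomial]
      rw [Finsupp.prod_fintype _ _ (fun i => pow_zero _), Fin.prod_univ_two]
      norm_num
      by_cases h0 : u 0 = 0
      · rw [h0, pow_zero, one_mul, coeff_X_pow]
        by_cases h1 : u 1 = 1
        · rw [if_pos ((finsupp_fin2_eq_single1 u).2 ⟨h0, h1⟩), if_pos h1.symm, mul_one]
        · rw [if_neg (fun h => h1 ((finsupp_fin2_eq_single1 u).1 h).2),
            if_neg (fun h => h1 h.symm), mul_zero]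
      · rw [zero_pow h0, zero_mul, coeff_zero, mul_zero,
          if_neg (fun h => h0 ((finsupp_fin2_eq_single1 u).1 h).1)]

lemma coeff_one_X_sub_one_pow (r : ℕ) :
    ((X - 1 : Polynomial ℤ) ^ r).coeff 1 = r * (-1) ^ (r - 1) := by
  have hd : ((X - 1 : Polynomial ℤ) ^ r).coeff 1 =
      (Polynomial.derivative ((X - 1 : Polynomial ℤ) ^ r)).coeff 0 := by
    rw [Polynomial.coeff_derivative]; push_cast; ring
  have h1 : (X - 1 : Polynomial ℤ) = X - Polynomial.C 1 := by simp
  rw [hd, h1, Polynomial.derivative_X_sub_C_pow, Polynomial.mul_coeff_zero,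
    Polynomial.coeff_C_zero, Polynomial.coeff_zero_eq_eval_zero]
  simp

lemma key_identity (r n : ℕ) :
    (-1 : ℤ) ^ n * ((r : ℤ) * (-1) ^ (r - 1)) + (-1) ^ r * ((n : ℤ) * (-1) ^ (n - 1)) =
      ((r + n : ℕ) : ℤ) * (-1) ^ (r + n - 1) := by
  match r, n with
  | 0, n => push_cast; ring
  | r + 1, 0 => push_cast; ring
  | r + 1, n + 1 =>
      have e1 : (r + 1 + (n + 1) - 1) = r + n + 1 := by omega
      have e2 : (r + 1 - 1) = r := by omega
      have e3 : (n + 1 - 1) = n := by omega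
      rw [e1, e2, e3]
      push_cast
      ring

lemma g_step (k : ℕ) :
    (k : ℤ) * (-1) ^ (k - 1) + ((k + 1 : ℕ) : ℤ) * (-1) ^ ((k + 1 : ℕ) - 1) =
      (-1) ^ k := by
  match k with
  | 0 => norm_num
  | k + 1 =>
      have e1 : (k + 1 - 1) = k := by omega
      have e2 : (k + 1 + 1 - 1) = k + 1 := by omega
      rw [e1, e2]
      push_cast
      ring

lemma sum_card_neg_one_pow {V : Type u} [Fintype V] (hV : 1 < Fintype.card V) :
    ∑ S : Finset V, (S.card : ℤ) * (-1) ^ (S.card - 1) = 0 := by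
  classical
  obtain ⟨v⟩ : Nonempty V := Fintype.card_pos_iff.1 (by omega)
  have huniv : (Finset.univ : Finset V) = insert v ((Finset.univ : Finset V).erase v) :=
    (Finset.insert_erase (Finset.mem_univ v)).symm
  have hv : v ∉ (Finset.univ : Finset V).erase v := Finset.notMem_erase v _
  have h1 : ∑ S : Finset V, (S.card : ℤ) * (-1) ^ (S.card - 1) =
      ∑ S ∈ (Finset.univ : Finset V).powerset, (S.card : ℤ) * (-1) ^ (S.card - 1) := by
    rw [Finset.powerset_univ]
  rw [h1, huniv, Finset.sum_powerset_insert hv]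
  have h2 : ∀ T ∈ ((Finset.univ : Finset V).erase v).powerset,
      ((insert v T).card : ℤ) * (-1) ^ ((insert v T).card - 1) =
      ((T.card + 1 : ℕ) : ℤ) * (-1) ^ ((T.card + 1 : ℕ) - 1) := by
    intro T hT
    have : v ∉ T := fun h => hv (Finset.mem_powerset.1 hT h)
    rw [Finset.card_insert_of_notMem this]
  rw [Finset.sum_congr rfl h2, ← Finset.sum_add_distrib]
  have h3 : ∀ T ∈ ((Finset.univ : Finset V).erase v).powerset,
      ((T.card : ℤ) * (-1) ^ (T.card - 1) +
        ((T.card + 1 : ℕ) : ℤ) * (-1) ^ ((T.card + 1 : ℕ) - 1)) = (-1) ^ T.card :=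
    fun T _ => g_step T.card
  rw [Finset.sum_congr rfl h3]
  have hne : ((Finset.univ : Finset V).erase v).Nonempty := by
    apply Finset.card_pos.mp
    rw [Finset.card_erase_of_mem (Finset.mem_univ v), Finset.card_univ]
    omega
  exact Finset.sum_powerset_neg_one_pow_card_of_nonempty hne

end Aux

/-- For a graph (possibly with loops) on more than one vertex, the coefficient of `x^1 y^0`
in the two-variable interlace polynomial is the negative of the coefficient of `x^0 y^1`. -/
theorem coeff_x_eq_neg_coeff_y {V : Type u} [Fintype V] (hV : 1 < Fintype.card V)
    (A : Matrix V V (ZMod 2)) (hA : A.IsSymm) :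
    MvPolynomial.coeff (Finsupp.single (0 : Fin 2) 1) (interlaceQMat A) =
      - MvPolynomial.coeff (Finsupp.single (1 : Fin 2) 1) (interlaceQMat A) := by
  classical
  set r : Finset V → ℕ := fun S =>
    (A.submatrix (fun i : S => (i : V)) (fun i : S => (i : V))).rank with hr
  have hrle : ∀ S : Finset V, r S ≤ S.card := by
    intro S
    have := Matrix.rank_le_card_width
      (A.submatrix (fun i : S => (i : V)) (fun i : S => (i : V)))
    simpa [hr, Fintype.card_coe] using this
  have hQ : interlaceQMat A = ∑ S : Finset V,
      (MvPolynomial.X 0 - 1) ^ (r S) * (MvPolynomial.X 1 - 1) ^ (S.card - r S) := rfl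
  -- coefficient of x
  have ha10 : MvPolynomial.coeff (Finsupp.single (0 : Fin 2) 1) (interlaceQMat A) =
      ∑ S : Finset V, ((r S : ℤ) * (-1) ^ (r S - 1)) * (-1) ^ (S.card - r S) := by
    rw [coeff_single0, hQ]
    rw [MvPolynomial.eval₂_sum, Polynomial.finset_sum_coeff]
    refine Finset.sum_congr rfl fun S _ => ?_
    rw [MvPolynomial.eval₂_mul, MvPolynomial.eval₂_pow, MvPolynomial.eval₂_pow,
      MvPolynomial.eval₂_sub, MvPolynomial.eval₂_sub, MvPolynomial.eval₂_X,
      MvPolynomial.eval₂_X, MvPolynomial.eval₂_one]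
    simp only [reduceIte]
    rw [if_neg (by decide : ¬(1 : Fin 2) = 0)]
    have : ((0 : Polynomial ℤ) - 1) ^ (S.card - r S) =
        Polynomial.C ((-1 : ℤ) ^ (S.card - r S)) := by
      rw [zero_sub, map_pow, map_neg, map_one]
    rw [this, Polynomial.coeff_mul_C, coeff_one_X_sub_one_pow]
  -- coefficient of y
  have ha01 : MvPolynomial.coeff (Finsupp.single (1 : Fin 2) 1) (interlaceQMat A) =
      ∑ S : Finset V, (-1 : ℤ) ^ (r S) *
        (((S.card - r S : ℕ) : ℤ) * (-1) ^ ((S.card - r S) - 1)) := by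
    rw [coeff_single1, hQ]
    rw [MvPolynomial.eval₂_sum, Polynomial.finset_sum_coeff]
    refine Finset.sum_congr rfl fun S _ => ?_
    rw [MvPolynomial.eval₂_mul, MvPolynomial.eval₂_pow, MvPolynomial.eval₂_pow,
      MvPolynomial.eval₂_sub, MvPolynomial.eval₂_sub, MvPolynomial.eval₂_X,
      MvPolynomial.eval₂_X, MvPolynomial.eval₂_one]
    simp only [reduceIte]
    rw [if_neg (by decide : ¬(0 : Fin 2) = 1)]
    have : ((0 : Polynomial ℤ) - 1) ^ (r S) = Polynomial.C ((-1 : ℤ) ^ (r S)) := by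
      rw [zero_sub, map_pow, map_neg, map_one]
    rw [this, Polynomial.coeff_C_mul, coeff_one_X_sub_one_pow]
  have hsum : MvPolynomial.coeff (Finsupp.single (0 : Fin 2) 1) (interlaceQMat A) +
      MvPolynomial.coeff (Finsupp.single (1 : Fin 2) 1) (interlaceQMat A) = 0 := by
    rw [ha10, ha01, ← Finset.sum_add_distrib]
    have h4 : ∀ S ∈ (Finset.univ : Finset (Finset V)),
        (((r S : ℤ) * (-1) ^ (r S - 1)) * (-1) ^ (S.card - r S) +
          (-1 : ℤ) ^ (r S) *
            (((S.card - r S : ℕ) : ℤ) * (-1) ^ ((S.card - r S) - 1))) =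
        (S.card : ℤ) * (-1) ^ (S.card - 1) := by
      intro S _
      have hk : r S + (S.card - r S) = S.card := by
        have := hrle S; omega
      calc ((r S : ℤ) * (-1) ^ (r S - 1)) * (-1) ^ (S.card - r S) +
            (-1 : ℤ) ^ (r S) *
              (((S.card - r S : ℕ) : ℤ) * (-1) ^ ((S.card - r S) - 1))
          = (-1 : ℤ) ^ (S.card - r S) * ((r S : ℤ) * (-1) ^ (r S - 1)) +
            (-1 : ℤ) ^ (r S) *
              (((S.card - r S : ℕ) : ℤ) * (-1) ^ ((S.card - r S) - 1)) := by ring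
        _ = ((r S + (S.card - r S) : ℕ) : ℤ) * (-1) ^ (r S + (S.card - r S) - 1) :=
            key_identity (r S) (S.card - r S)
        _ = (S.card : ℤ) * (-1) ^ (S.card - 1) := by rw [hk]
    rw [Finset.sum_congr rfl h4]
    exact sum_card_neg_one_pow hV
  linarith [hsum]
end

section
/- Let G be a finite simple graph. Then every coefficient of the vertex-nullity interlace polynomial q_N(G;x) is a nonnegative integer; in particular, the non-zero coefficients of q_N(G;x) are positive integers. -/
open Polynomial

universe u

variable {V : Type u}

section InterlacePositivity

set_option linter.unusedTactic false

open Matrix Finset Module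

private lemma zmod2_add_self : ∀ x : ZMod 2, x + x = 0 := by decide

private lemma mat_add_self {m n : Type*} (A : Matrix m n (ZMod 2)) : A + A = 0 := by
  ext i j
  simp only [Matrix.add_apply, Matrix.zero_apply]
  exact zmod2_add_self _

/-- The `F_2` rank of the principal submatrix of `M` on `S`. -/
private noncomputable def rkM [Fintype V] (M : Matrix V V (ZMod 2)) (S : Finset V) : ℕ :=
  (M.submatrix (fun i : S => (i : V)) (fun i : S => (i : V))).rank

/-- The matrix of the pivot `G^{ab}` : entries with both indices outside `{a,b}` get the
principal-pivot-transform correction; all other entries are unchanged. -/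
private def pivM [DecidableEq V] (M : Matrix V V (ZMod 2)) (a b : V) : Matrix V V (ZMod 2) :=
  Matrix.of fun x y =>
    if x = a ∨ x = b ∨ y = a ∨ y = b then M x y
    else M x y + M x a * M b y + M x b * M a y

private lemma pivM_symm [DecidableEq V] (M : Matrix V V (ZMod 2)) (hsym : Mᵀ = M) (a b : V) :
    (pivM M a b)ᵀ = pivM M a b := by
  have hM : ∀ x y : V, M x y = M y x := fun x y => (congrFun (congrFun hsym x) y).symm
  ext x y
  show pivM M a b y x = pivM M a b x y
  by_cases h : x = a ∨ x = b ∨ y = a ∨ y = b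
  · have h' : y = a ∨ y = b ∨ x = a ∨ x = b := by tauto
    simp only [pivM, Matrix.of_apply, if_pos h, if_pos h']
    exact hM y x
  · have h' : ¬ (y = a ∨ y = b ∨ x = a ∨ x = b) := by tauto
    simp only [pivM, Matrix.of_apply, if_neg h, if_neg h']
    rw [hM y x, hM y a, hM y b, hM b x, hM a x]
    ring

private lemma pivM_diag [DecidableEq V] (M : Matrix V V (ZMod 2)) (hsym : Mᵀ = M)
    (hdiag : ∀ x, M x x = 0) (a b : V) : ∀ x, pivM M a b x x = 0 := by
  have hM : ∀ x y : V, M x y = M y x := fun x y => (congrFun (congrFun hsym x) y).symm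
  intro x
  by_cases h : x = a ∨ x = b ∨ x = a ∨ x = b
  · simp only [pivM, Matrix.of_apply, if_pos h]; exact hdiag x
  · simp only [pivM, Matrix.of_apply, if_neg h, hdiag x, zero_add]
    rw [hM b x, hM a x, mul_comm (M x b) (M x a)]
    exact zmod2_add_self _

/-- Conjugating by an invertible matrix preserves rank. -/
private lemma rank_conj {n : Type*} [Fintype n] [DecidableEq n] (E N : Matrix n n (ZMod 2))
    (hE : IsUnit E.det) : (E * N * Eᵀ).rank = N.rank := by
  rw [Matrix.rank_mul_eq_left_of_isUnit_det Eᵀ (E * N) (by rwa [Matrix.det_transpose]),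
    Matrix.rank_mul_eq_right_of_isUnit_det E N hE]

/-- Rank of a block diagonal matrix whose upper-left block is invertible. -/
private lemma rank_fromBlocks_diag {m n : Type*} [Fintype m] [Fintype n] [DecidableEq m]
    [DecidableEq n] (P : Matrix m m (ZMod 2)) (D : Matrix n n (ZMod 2)) (hP : IsUnit P.det) :
    (Matrix.fromBlocks P 0 0 D).rank = Fintype.card m + D.rank := by
  classical
  set f := (Matrix.fromBlocks P 0 0 D).mulVecLin with hf
  let j : (n → ZMod 2) →ₗ[ZMod 2] (m ⊕ n → ZMod 2) :=
    { toFun := fun v => Sum.elim 0 v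
      map_add' := by intro u v; funext i; cases i <;> simp
      map_smul' := by intro c v; funext i; cases i <;> simp }
  have hjinj : Function.Injective j := by
    intro u v h
    funext i
    exact congrFun h (Sum.inr i)
  have hPinj : ∀ u : m → ZMod 2, P.mulVec u = 0 → u = 0 := by
    intro u hu
    have h2 : P⁻¹.mulVec (P.mulVec u) = 0 := by rw [hu]; simp
    rwa [Matrix.mulVec_mulVec, Matrix.nonsing_inv_mul _ hP, Matrix.one_mulVec] at h2
  have hker : LinearMap.ker f = Submodule.map j (LinearMap.ker D.mulVecLin) := by
    ext v
    simp only [LinearMap.mem_ker, Submodule.mem_map]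
    constructor
    · intro hv
      have hv' : (Matrix.fromBlocks P 0 0 D).mulVec v = 0 := hv
      rw [Matrix.fromBlocks_mulVec] at hv'
      have h1 : P.mulVec (v ∘ Sum.inl) + (0 : Matrix m n (ZMod 2)).mulVec (v ∘ Sum.inr) = 0 := by
        funext i; exact congrFun hv' (Sum.inl i)
      have h2 : (0 : Matrix n m (ZMod 2)).mulVec (v ∘ Sum.inl) + D.mulVec (v ∘ Sum.inr) = 0 := by
        funext i; exact congrFun hv' (Sum.inr i)
      rw [Matrix.zero_mulVec, add_zero] at h1
      rw [Matrix.zero_mulVec, zero_add] at h2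
      refine ⟨v ∘ Sum.inr, h2, ?_⟩
      have hl := hPinj _ h1
      funext i
      cases i with
      | inl i => exact (congrFun hl i).symm
      | inr i => rfl
    · rintro ⟨w, hw, rfl⟩
      show (Matrix.fromBlocks P 0 0 D).mulVec (Sum.elim 0 w) = 0
      rw [Matrix.fromBlocks_mulVec]
      have hw' : D.mulVec w = 0 := hw
      funext i
      cases i with
      | inl i =>
          simp [Matrix.zero_mulVec, show (Sum.elim (0 : m → ZMod 2) w) ∘ Sum.inl = 0 from rfl]
      | inr i =>
          simp [Matrix.zero_mulVec, show (Sum.elim (0 : m → ZMod 2) w) ∘ Sum.inr = w from rfl, hw']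
  have hdim : finrank (ZMod 2) (LinearMap.ker f) = finrank (ZMod 2) (LinearMap.ker D.mulVecLin) := by
    rw [hker]
    exact (LinearEquiv.finrank_eq
      (Submodule.equivMapOfInjective j hjinj (LinearMap.ker D.mulVecLin))).symm
  have h1 := f.finrank_range_add_finrank_ker
  have h2 := D.mulVecLin.finrank_range_add_finrank_ker
  rw [Module.finrank_pi, Fintype.card_sum] at h1
  rw [Module.finrank_pi] at h2
  have hr1 : (Matrix.fromBlocks P 0 0 D).rank = finrank (ZMod 2) (LinearMap.range f) := rfl
  have hr2 : D.rank = finrank (ZMod 2) (LinearMap.range D.mulVecLin) := rfl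
  omega

private lemma rank_submatrix_comp {ι : Type*} [Fintype ι] [Fintype V]
    (M : Matrix V V (ZMod 2)) (T : Finset V) (g : ι → V)
    (hinj : Function.Injective g) (hmem : ∀ i, g i ∈ T) (hsurj : ∀ v ∈ T, ∃ i, g i = v) :
    (M.submatrix g g).rank = rkM M T := by
  have hbij : Function.Bijective (fun i => (⟨g i, hmem i⟩ : {x // x ∈ T})) := by
    constructor
    · intro i j h
      exact hinj (congrArg Subtype.val h)
    · rintro ⟨v, hv⟩
      obtain ⟨i, hi⟩ := hsurj v hv
      exact ⟨i, Subtype.ext hi⟩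
  let e := Equiv.ofBijective _ hbij
  have h : M.submatrix g g =
      (M.submatrix (fun i : T => (i : V)) (fun i : T => (i : V))).submatrix e e := rfl
  rw [h, Matrix.rank_submatrix]
  rfl

/-- Pivoting does not change the rank of a principal submatrix containing `a` but not `b`. -/
private lemma rkM_insert_pivot [Fintype V] [DecidableEq V] (M : Matrix V V (ZMod 2))
    (hsym : Mᵀ = M) (hdiag : ∀ x, M x x = 0) (a b : V) (S : Finset V)
    (haS : a ∉ S) (hbS : b ∉ S) :
    rkM (pivM M a b) (insert a S) = rkM M (insert a S) := by
  classical
  have hM : ∀ x y : V, M x y = M y x := fun x y => (congrFun (congrFun hsym x) y).symm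
  set g : (Unit ⊕ ↥S) → V := Sum.elim (fun _ => a) (fun x => (x : V)) with hg
  have htrans : ∀ N : Matrix V V (ZMod 2), (N.submatrix g g).rank = rkM N (insert a S) := by
    intro N
    apply rank_submatrix_comp
    · rintro (i | x) (j | y) h
      · exact congrArg Sum.inl (Subsingleton.elim i j)
      · exact absurd y.2 ((show a = (y : V) from h) ▸ haS)
      · exact absurd x.2 ((show (x : V) = a from h).symm ▸ haS)
      · exact congrArg Sum.inr (Subtype.ext h)
    · rintro (i | x)
      · exact Finset.mem_insert_self a S
      · exact Finset.mem_insert_of_mem x.2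
    · intro v hv
      rcases Finset.mem_insert.mp hv with h | h
      · exact ⟨Sum.inl (), h.symm⟩
      · exact ⟨Sum.inr ⟨v, h⟩, rfl⟩
  let α : Matrix Unit ↥S (ZMod 2) := Matrix.of fun _ y => M a y
  let γ : Matrix ↥S Unit (ZMod 2) := Matrix.of fun x _ => M x a
  let β : Matrix ↥S Unit (ZMod 2) := Matrix.of fun x _ => M x b
  let C : Matrix ↥S ↥S (ZMod 2) := Matrix.of fun x y => M x y
  have hN : M.submatrix g g = Matrix.fromBlocks 0 α γ C := by
    ext i j
    rcases i with i | x <;> rcases j with j | y <;>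
      simp [g, α, γ, C, hdiag a]
  have hxa : ∀ x : ↥S, (x : V) ≠ a := fun x h => haS (h ▸ x.2)
  have hxb : ∀ x : ↥S, (x : V) ≠ b := fun x h => hbS (h ▸ x.2)
  have hN' : (pivM M a b).submatrix g g = Matrix.fromBlocks 0 α γ (C + γ * βᵀ + β * α) := by
    ext i j
    rcases i with i | x <;> rcases j with j | y
    · simp [g, pivM, hdiag a]
    · simp [g, pivM, α]
    · simp [g, pivM, γ]
    · simp only [Matrix.submatrix_apply, Matrix.fromBlocks_apply₂₂, g, Sum.elim_inr]
      have hcond : ¬((x : V) = a ∨ (x : V) = b ∨ (y : V) = a ∨ (y : V) = b) := by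
        rintro (h | h | h | h)
        exacts [hxa x h, hxb x h, hxa y h, hxb y h]
      simp only [pivM, Matrix.of_apply, if_neg hcond]
      simp only [Matrix.add_apply, Matrix.mul_apply, Finset.univ_unique, Finset.sum_singleton,
        Matrix.of_apply, C, γ, β, α, Matrix.transpose_apply]
      rw [hM b (y : V)]
  let E : Matrix (Unit ⊕ ↥S) (Unit ⊕ ↥S) (ZMod 2) := Matrix.fromBlocks 1 0 β 1
  have hEdet : IsUnit E.det := by
    have : E.det = 1 := by
      rw [show E = Matrix.fromBlocks 1 0 β 1 from rfl, Matrix.det_fromBlocks_zero₁₂]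
      simp
    rw [this]; exact isUnit_one
  have hkey : E * (Matrix.fromBlocks 0 α γ C) * Eᵀ
      = Matrix.fromBlocks 0 α γ (C + γ * βᵀ + β * α) := by
    rw [show E = Matrix.fromBlocks 1 0 β 1 from rfl, Matrix.fromBlocks_transpose,
      Matrix.transpose_one, Matrix.transpose_zero, Matrix.fromBlocks_multiply,
      Matrix.fromBlocks_multiply]
    simp only [Matrix.transpose_one, Matrix.one_mul, Matrix.mul_one, Matrix.zero_mul,
      Matrix.mul_zero, add_zero, zero_add]
    congr 1
    abel
  rw [← htrans (pivM M a b), ← htrans M, hN, hN', ← hkey, rank_conj _ _ hEdet]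

private lemma rkM_insert_insert_pivot [Fintype V] [DecidableEq V] (M : Matrix V V (ZMod 2))
    (hsym : Mᵀ = M) (hdiag : ∀ x, M x x = 0) (a b : V) (hab : M a b = 1) (S : Finset V)
    (haS : a ∉ S) (hbS : b ∉ S) (hne : a ≠ b) :
    rkM M (insert a (insert b S)) = 2 + rkM (pivM M a b) S := by
  classical
  have hM : ∀ x y : V, M x y = M y x := fun x y => (congrFun (congrFun hsym x) y).symm
  set g : (Fin 2 ⊕ ↥S) → V := Sum.elim ![a, b] (fun x => (x : V)) with hg
  have hxa : ∀ x : ↥S, (x : V) ≠ a := fun x h => haS (h ▸ x.2)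
  have hxb : ∀ x : ↥S, (x : V) ≠ b := fun x h => hbS (h ▸ x.2)
  have htrans : (M.submatrix g g).rank = rkM M (insert a (insert b S)) := by
    apply rank_submatrix_comp
    · rintro (i | x) (j | y) h
      · fin_cases i <;> fin_cases j
        · rfl
        · exact absurd h hne
        · exact absurd h hne.symm
        · rfl
      · fin_cases i
        · exact absurd y.2 ((show a = (y : V) from h) ▸ haS)
        · exact absurd y.2 ((show b = (y : V) from h) ▸ hbS)
      · fin_cases j
        · exact absurd x.2 ((show (x : V) = a from h).symm ▸ haS)
        · exact absurd x.2 ((show (x : V) = b from h).symm ▸ hbS)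
      · exact congrArg Sum.inr (Subtype.ext h)
    · rintro (i | x)
      · fin_cases i
        · exact Finset.mem_insert_self a _
        · exact Finset.mem_insert_of_mem (Finset.mem_insert_self b S)
      · exact Finset.mem_insert_of_mem (Finset.mem_insert_of_mem x.2)
    · intro v hv
      rcases Finset.mem_insert.mp hv with h | h
      · exact ⟨Sum.inl 0, h.symm⟩
      · rcases Finset.mem_insert.mp h with h' | h'
        · exact ⟨Sum.inl 1, h'.symm⟩
        · exact ⟨Sum.inr ⟨v, h'⟩, rfl⟩
  let P : Matrix (Fin 2) (Fin 2) (ZMod 2) := !![0, 1; 1, 0]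
  have hPP : P * P = 1 := by decide
  have hPt : Pᵀ = P := by decide
  have hPdet : IsUnit P.det := by
    have h : P.det = 1 := by decide
    rw [h]; exact isUnit_one
  let ρ : Matrix (Fin 2) ↥S (ZMod 2) := Matrix.of fun i y => M (![a, b] i) y
  let γ : Matrix ↥S (Fin 2) (ZMod 2) := Matrix.of fun x i => M x (![a, b] i)
  let C : Matrix ↥S ↥S (ZMod 2) := Matrix.of fun x y => M x y
  have hN : M.submatrix g g = Matrix.fromBlocks P ρ γ C := by
    ext i j
    rcases i with i | x <;> rcases j with j | y
    · fin_cases i <;> fin_cases j <;>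
        simp [g, P, hdiag a, hdiag b, hab, hM b a]
    · fin_cases i <;> simp [g, ρ]
    · fin_cases j <;> simp [g, γ]
    · simp [g, C]
  have hγt : γᵀ = ρ := by
    ext i y
    simp only [Matrix.transpose_apply, Matrix.of_apply, γ, ρ]
    exact hM _ _
  let L : Matrix (Fin 2 ⊕ ↥S) (Fin 2 ⊕ ↥S) (ZMod 2) := Matrix.fromBlocks 1 0 (γ * P) 1
  have hLdet : IsUnit L.det := by
    have h : L.det = 1 := by
      rw [show L = Matrix.fromBlocks 1 0 (γ * P) 1 from rfl, Matrix.det_fromBlocks_zero₁₂]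
      simp
    rw [h]; exact isUnit_one
  have e1 : γ * P * P + γ = 0 := by
    rw [Matrix.mul_assoc, hPP, Matrix.mul_one]; exact mat_add_self γ
  have e2 : P * (P * ρ) + ρ = 0 := by
    rw [← Matrix.mul_assoc, hPP, Matrix.one_mul]; exact mat_add_self ρ
  have hkey : L * (Matrix.fromBlocks P ρ γ C) * Lᵀ
      = Matrix.fromBlocks P 0 0 (γ * P * ρ + C) := by
    rw [show L = Matrix.fromBlocks 1 0 (γ * P) 1 from rfl, Matrix.fromBlocks_transpose,
      Matrix.transpose_one, Matrix.transpose_zero, Matrix.fromBlocks_multiply,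
      Matrix.fromBlocks_multiply]
    simp only [Matrix.transpose_one, Matrix.one_mul, Matrix.mul_one, Matrix.zero_mul,
      Matrix.mul_zero, add_zero, zero_add, Matrix.transpose_mul, hPt, hγt, e1, e2,
      Matrix.zero_mul]
  have hD : γ * P * ρ + C
      = (pivM M a b).submatrix (fun x : ↥S => (x : V)) (fun x : ↥S => (x : V)) := by
    ext x y
    have hcond : ¬((x : V) = a ∨ (x : V) = b ∨ (y : V) = a ∨ (y : V) = b) := by
      rintro (h | h | h | h)
      exacts [hxa x h, hxb x h, hxa y h, hxb y h]
    have hP00 : P 0 0 = 0 := rfl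
    have hP01 : P 0 1 = 1 := rfl
    have hP10 : P 1 0 = 1 := rfl
    have hP11 : P 1 1 = 0 := rfl
    simp only [Matrix.add_apply, Matrix.mul_apply, Matrix.of_apply, Matrix.submatrix_apply,
      pivM, if_neg hcond, Fin.sum_univ_two, hP00, hP01, hP10, hP11, γ, ρ, C,
      Matrix.cons_val_zero, Matrix.cons_val_one, Matrix.head_cons]
    rw [hM b (y : V)]
    ring
  calc rkM M (insert a (insert b S)) = (M.submatrix g g).rank := htrans.symm
    _ = (L * (M.submatrix g g) * Lᵀ).rank := (rank_conj L _ hLdet).symm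
    _ = (Matrix.fromBlocks P 0 0 (γ * P * ρ + C)).rank := by rw [hN, hkey]
    _ = Fintype.card (Fin 2) + (γ * P * ρ + C).rank := rank_fromBlocks_diag P _ hPdet
    _ = 2 + rkM (pivM M a b) S := by rw [Fintype.card_fin, hD]; rfl

private lemma sum_powerset_pow_card {W : Type u} [DecidableEq W] (A : Finset W) :
    ∑ S ∈ A.powerset, ((X : Polynomial ℤ) - 1) ^ S.card = X ^ A.card := by
  induction A using Finset.induction_on with
  | empty => simp
  | @insert a s ha ih =>
    rw [Finset.sum_powerset_insert ha, ih, Finset.card_insert_of_notMem ha]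
    have h : ∀ T ∈ s.powerset, ((X : Polynomial ℤ) - 1) ^ (insert a T).card
        = (X - 1) * (X - 1) ^ T.card := by
      intro T hT
      have haT : a ∉ T := fun hc => ha (Finset.mem_powerset.mp hT hc)
      rw [Finset.card_insert_of_notMem haT, pow_succ, mul_comm]
    rw [Finset.sum_congr rfl h, ← Finset.mul_sum, ih]
    ring

private theorem qM_coeff_nonneg {W : Type u} [Fintype W] [DecidableEq W] :
    ∀ (n : ℕ) (A : Finset W), A.card = n →
      ∀ M : Matrix W W (ZMod 2), Mᵀ = M → (∀ x, M x x = 0) →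
        ∀ k, 0 ≤ (∑ S ∈ A.powerset, ((X : Polynomial ℤ) - 1) ^ (S.card - rkM M S)).coeff k := by
  intro n
  induction n using Nat.strong_induction_on with
  | _ n ih =>
    intro A hA M hsym hdiag k
    by_cases hE : ∃ a ∈ A, ∃ b ∈ A, M a b = 1
    · obtain ⟨a, ha, b, hb, hab⟩ := hE
      have hne : a ≠ b := by
        rintro rfl
        rw [hdiag a] at hab
        exact zero_ne_one hab
      have hins : insert a (A.erase a) = A := Finset.insert_erase ha
      rw [← hins, Finset.sum_powerset_insert (Finset.notMem_erase a A), Polynomial.coeff_add]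
      have hcard1 : (A.erase a).card < n := hA ▸ Finset.card_erase_lt_of_mem ha
      have hcard2 : (A.erase b).card < n := hA ▸ Finset.card_erase_lt_of_mem hb
      have t1 := ih _ hcard1 (A.erase a) rfl M hsym hdiag k
      have hrw : (∑ S ∈ (A.erase a).powerset,
            ((X : Polynomial ℤ) - 1) ^ ((insert a S).card - rkM M (insert a S)))
          = ∑ T ∈ (A.erase b).powerset,
            ((X : Polynomial ℤ) - 1) ^ (T.card - rkM (pivM M a b) T) := by
        refine Finset.sum_bij' (fun S _ => if b ∈ S then S.erase b else insert a S)
          (fun T _ => if a ∈ T then T.erase a else insert b T) ?_ ?_ ?_ ?_ ?_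
        · -- maps into target
          intro S hS
          have hS' : S ⊆ A.erase a := Finset.mem_powerset.mp hS
          by_cases hbS : b ∈ S
          · rw [if_pos hbS]
            exact Finset.mem_powerset.mpr
              (Finset.erase_subset_erase b (hS'.trans (Finset.erase_subset a A)))
          · rw [if_neg hbS]
            refine Finset.mem_powerset.mpr (Finset.insert_subset ?_ ?_)
            · exact Finset.mem_erase.mpr ⟨hne, ha⟩
            · intro x hx
              exact Finset.mem_erase.mpr ⟨fun hc => hbS (hc ▸ hx),
                (Finset.erase_subset a A) (hS' hx)⟩
        · -- inverse maps into source
          intro T hT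
          have hT' : T ⊆ A.erase b := Finset.mem_powerset.mp hT
          by_cases haT : a ∈ T
          · rw [if_pos haT]
            exact Finset.mem_powerset.mpr
              (Finset.erase_subset_erase a (hT'.trans (Finset.erase_subset b A)))
          · rw [if_neg haT]
            refine Finset.mem_powerset.mpr (Finset.insert_subset ?_ ?_)
            · exact Finset.mem_erase.mpr ⟨hne.symm, hb⟩
            · intro x hx
              exact Finset.mem_erase.mpr ⟨fun hc => haT (hc ▸ hx),
                (Finset.erase_subset b A) (hT' hx)⟩
        · -- left inverse
          intro S hS
          have hS' : S ⊆ A.erase a := Finset.mem_powerset.mp hS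
          have haS : a ∉ S := fun hc => (Finset.mem_erase.mp (hS' hc)).1 rfl
          by_cases hbS : b ∈ S
          · rw [if_pos hbS, if_neg (fun hc : a ∈ S.erase b => haS (Finset.mem_of_mem_erase hc)),
              Finset.insert_erase hbS]
          · rw [if_neg hbS, if_pos (Finset.mem_insert_self a S), Finset.erase_insert haS]
        · -- right inverse
          intro T hT
          have hT' : T ⊆ A.erase b := Finset.mem_powerset.mp hT
          have hbT : b ∉ T := fun hc => (Finset.mem_erase.mp (hT' hc)).1 rfl
          by_cases haT : a ∈ T
          · rw [if_pos haT, if_neg (fun hc : b ∈ T.erase a => hbT (Finset.mem_of_mem_erase hc)),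
              Finset.insert_erase haT]
          · rw [if_neg haT, if_pos (Finset.mem_insert_self b T), Finset.erase_insert hbT]
        · -- values agree
          intro S hS
          have hS' : S ⊆ A.erase a := Finset.mem_powerset.mp hS
          have haS : a ∉ S := fun hc => (Finset.mem_erase.mp (hS' hc)).1 rfl
          by_cases hbS : b ∈ S
          · rw [if_pos hbS]
            have hrep : insert b (S.erase b) = S := Finset.insert_erase hbS
            have haS' : a ∉ S.erase b := fun hc => haS (Finset.mem_of_mem_erase hc)
            have hbS' : b ∉ S.erase b := Finset.notMem_erase b S
            have hrk : rkM M (insert a S) = 2 + rkM (pivM M a b) (S.erase b) := by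
              conv_lhs => rw [← hrep]
              exact rkM_insert_insert_pivot M hsym hdiag a b hab (S.erase b) haS' hbS' hne
            have hc1 : (insert a S).card = (S.erase b).card + 2 := by
              rw [Finset.card_insert_of_notMem haS]
              have h3 := Finset.card_erase_add_one hbS
              omega
            rw [hrk, hc1]
            congr 1
            omega
          · rw [if_neg hbS]
            rw [rkM_insert_pivot M hsym hdiag a b S haS hbS]
      rw [hrw]
      have t2 := ih _ hcard2 (A.erase b) rfl (pivM M a b) (pivM_symm M hsym a b)
        (pivM_diag M hsym hdiag a b) k
      exact add_nonneg t1 t2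
    · push_neg at hE
      have hz : ∀ x ∈ A, ∀ y ∈ A, M x y = 0 := by
        intro x hx y hy
        have h2 : ∀ u : ZMod 2, u ≠ 1 → u = 0 := by decide
        exact h2 _ (hE x hx y hy)
      have hsum : (∑ S ∈ A.powerset, ((X : Polynomial ℤ) - 1) ^ (S.card - rkM M S))
          = ∑ S ∈ A.powerset, ((X : Polynomial ℤ) - 1) ^ S.card := by
        refine Finset.sum_congr rfl fun S hS => ?_
        have hsub : S ⊆ A := Finset.mem_powerset.mp hS
        have h0 : (M.submatrix (fun i : S => (i : W)) (fun i : S => (i : W))) = 0 := by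
          ext x y
          exact hz _ (hsub x.2) _ (hsub y.2)
        rw [rkM, h0, Matrix.rank_zero, Nat.sub_zero]
      rw [hsum, sum_powerset_pow_card, Polynomial.coeff_X_pow]
      split_ifs <;> norm_num

/-- Every coefficient of the vertex-nullity interlace polynomial of a finite simple graph
is a nonnegative integer. -/
theorem qNull_coeff_nonneg {V : Type u} [Fintype V] (G : SimpleGraph V) (k : ℕ) :
    0 ≤ (qNull G).coeff k := by
  classical
  letI : DecidableRel G.Adj := Classical.decRel G.Adj
  have hsym : (SimpleGraph.adjMatrix (ZMod 2) G)ᵀ = SimpleGraph.adjMatrix (ZMod 2) G :=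
    SimpleGraph.isSymm_adjMatrix G
  have hdiag : ∀ x, SimpleGraph.adjMatrix (ZMod 2) G x x = 0 := by
    intro x; simp
  have h := qM_coeff_nonneg (Finset.univ.card) Finset.univ rfl
    (SimpleGraph.adjMatrix (ZMod 2) G) hsym hdiag k
  rw [Finset.powerset_univ] at h
  have hq : qNull G = ∑ S ∈ (Finset.univ : Finset (Finset V)),
      ((X : Polynomial ℤ) - 1) ^ (S.card - rkM (SimpleGraph.adjMatrix (ZMod 2) G) S) := rfl
  rw [hq]
  exact h

end InterlacePositivity
end

section
/- Let G be a finite simple graph and let vw be an edge of G. Then γ(G) = γ(G − v) + γ(G^{vw} − w), where G − v denotes the induced subgraph of G on V ∖ {v} and G^{vw} − w denotes the induced subgraph of the pivot G^{vw} on V ∖ {w}. -/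
open Polynomial

universe u

variable {V : Type u}

/- ===================== auxiliary development ===================== -/

section AuxMatrix
open Matrix Module

variable {K : Type*} [Field K] {m n : Type*} [Fintype m] [Fintype n] [DecidableEq m] [DecidableEq n]

lemma aux_finrank_submodule_prod {M N : Type*} [AddCommGroup M] [Module K M] [AddCommGroup N]
    [Module K N] [FiniteDimensional K M] [FiniteDimensional K N]
    (p : Submodule K M) (q : Submodule K N) :
    finrank K (p.prod q) = finrank K p + finrank K q := by
  have e : ↥(p.prod q) ≃ₗ[K] ↥p × ↥q :=
    { toFun := fun x => (⟨x.1.1, x.2.1⟩, ⟨x.1.2, x.2.2⟩)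
      invFun := fun x => ⟨(x.1.1, x.2.1), ⟨x.1.2, x.2.2⟩⟩
      left_inv := fun x => rfl
      right_inv := fun x => rfl
      map_add' := fun x y => rfl
      map_smul' := fun c x => rfl }
  rw [e.finrank_eq, Module.finrank_prod]

lemma aux_range_prodMap {M N M' N' : Type*} [AddCommGroup M] [Module K M] [AddCommGroup N]
    [Module K N] [AddCommGroup M'] [Module K M'] [AddCommGroup N'] [Module K N']
    (f : M →ₗ[K] M') (g : N →ₗ[K] N') :
    LinearMap.range (f.prodMap g) = (LinearMap.range f).prod (LinearMap.range g) := by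
  ext ⟨a, b⟩
  simp only [LinearMap.mem_range, LinearMap.prodMap_apply, Submodule.mem_prod, Prod.mk.injEq,
    Prod.exists]
  constructor
  · rintro ⟨x, y, h1, h2⟩; exact ⟨⟨x, h1⟩, ⟨y, h2⟩⟩
  · rintro ⟨⟨x, h1⟩, ⟨y, h2⟩⟩; exact ⟨x, y, h1, h2⟩

omit [DecidableEq m] [DecidableEq n] in
lemma aux_rank_fromBlocks_diag (A : Matrix m m K) (B : Matrix n n K) :
    (Matrix.fromBlocks A 0 0 B).rank = A.rank + B.rank := by
  classical
  let e := LinearEquiv.sumArrowLequivProdArrow m n K K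
  have key : (Matrix.fromBlocks A 0 0 B).mulVecLin
      = (e.symm.toLinearMap.comp ((A.mulVecLin.prodMap B.mulVecLin).comp e.toLinearMap)) := by
    apply LinearMap.ext; intro x
    simp only [Matrix.mulVecLin_apply, LinearMap.coe_comp, LinearEquiv.coe_coe,
      Function.comp_apply, LinearMap.prodMap_apply]
    rw [Matrix.fromBlocks_mulVec]
    funext i
    cases i <;> simp [e, LinearEquiv.sumArrowLequivProdArrow, Equiv.sumArrowEquivProdArrow,
      Matrix.zero_mulVec]
  rw [Matrix.rank, key, LinearMap.range_comp, LinearMap.range_comp_of_range_eq_top _ e.range,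
    aux_range_prodMap, LinearEquiv.finrank_map_eq, aux_finrank_submodule_prod]
  rfl

omit [DecidableEq m] in
lemma aux_rank_conj (M E : Matrix n n K) (hE : E * E = 1) : (E * M * Eᵀ).rank = M.rank := by
  have hdet : IsUnit E.det := by
    have : E.det * E.det = 1 := by rw [← Matrix.det_mul, hE, Matrix.det_one]
    exact IsUnit.of_mul_eq_one _ this
  have hdetT : IsUnit Eᵀ.det := by rwa [Matrix.det_transpose]
  rw [Matrix.rank_mul_eq_left_of_isUnit_det _ _ hdetT,
    Matrix.rank_mul_eq_right_of_isUnit_det _ _ hdet]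

end AuxMatrix

section AuxEnt
open Matrix Module

variable {V : Type u} (G : SimpleGraph V) (v w : V)

open Classical in
/-- matrix entry of the adjacency matrix over `ZMod 2` -/
noncomputable def ent (G : SimpleGraph V) (x y : V) : ZMod 2 := if G.Adj x y then 1 else 0

lemma ent_self (x : V) : ent G x x = 0 := by simp [ent]

lemma ent_comm (x y : V) : ent G x y = ent G y x := by
  have h : G.Adj x y = G.Adj y x := propext (SimpleGraph.adj_comm G x y)
  simp only [ent]; rw [h]

lemma ent_one {x y : V} (h : G.Adj x y) : ent G x y = 1 := by simp [ent, h]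

lemma pivot_adj (x y : V) : (pivot G v w).Adj x y ↔ x ≠ y ∧
    ((pivotToggle G v w x y ∧ ¬ G.Adj x y) ∨ (¬ pivotToggle G v w x y ∧ G.Adj x y)) :=
  Iff.rfl

lemma pivotToggle_left (y : V) : ¬ pivotToggle G v w v y := by
  simp [pivotToggle, pivotToggleHalf, adjOnly, adjBoth]

lemma pivot_adj_left (y : V) : (pivot G v w).Adj v y ↔ G.Adj v y := by
  constructor
  · rintro ⟨hne, ⟨ht, -⟩ | ⟨-, ha⟩⟩
    · exact absurd ht (pivotToggle_left G v w y)
    · exact ha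
  · intro h
    exact ⟨h.ne, Or.inr ⟨pivotToggle_left G v w y, h⟩⟩

lemma ent_pivot_left (y : V) : ent (pivot G v w) v y = ent G v y := by
  have h : (pivot G v w).Adj v y = G.Adj v y := propext (pivot_adj_left G v w y)
  simp only [ent]; rw [h]

lemma ent_pivot (x y : V) (hx1 : x ≠ v) (hx2 : x ≠ w) (hy1 : y ≠ v) (hy2 : y ≠ w) :
    ent (pivot G v w) x y = ent G x y + ent G v x * ent G w y + ent G w x * ent G v y := by
  by_cases hxy : x = y
  · subst hxy
    rw [ent_self, ent_self]
    ring_nf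
    have h2 : (2 : ZMod 2) = 0 := rfl
    rw [h2, mul_zero]
  · have hyx : y ≠ x := fun h => hxy h.symm
    by_cases a1 : G.Adj v x <;> by_cases a2 : G.Adj w x <;> by_cases a3 : G.Adj v y <;>
      by_cases a4 : G.Adj w y <;> by_cases a5 : G.Adj x y <;>
      simp only [ent, pivot_adj, pivotToggle, pivotToggleHalf, adjOnly, adjBoth, a1, a2, a3, a4,
        a5, hx1, hx2, hy1, hy2, hxy, hyx, ne_eq, not_false_eq_true, not_true, true_and, false_and,
        and_true, and_false, or_false, false_or, or_true, true_or, not_false_iff, and_self,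
        if_true, if_false, ite_true, ite_false] <;>
      norm_num <;> decide

end AuxEnt

section AuxRank
open Matrix Module Finset

noncomputable def entMat {V : Type u} (G : SimpleGraph V) (S : Finset V) :
    Matrix {x // x ∈ S} {x // x ∈ S} (ZMod 2) :=
  Matrix.of fun i j => ent G i.1 j.1

lemma rankIn_eq {V : Type u} [Fintype V] (G : SimpleGraph V) (S : Finset V) :
    rankIn G S = (entMat G S).rank := by
  unfold rankIn entMat
  congr 1

lemma rankIn_comap {W V : Type u} [Fintype W] [Fintype V] (f : W → V)
    (hf : Function.Injective f) (G : SimpleGraph V) (S : Finset W) :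
    rankIn (SimpleGraph.comap f G) S = rankIn G (S.map ⟨f, hf⟩) := by
  rw [rankIn_eq, rankIn_eq]
  let e : {x // x ∈ S} ≃ {y // y ∈ S.map ⟨f, hf⟩} :=
    Equiv.ofBijective (fun x => ⟨f x.1, Finset.mem_map_of_mem _ x.2⟩)
      ⟨fun a b h => Subtype.ext (hf (congrArg Subtype.val h)), by
        rintro ⟨y, hy⟩
        rw [Finset.mem_map] at hy
        obtain ⟨x, hx, rfl⟩ := hy
        exact ⟨⟨x, hx⟩, rfl⟩⟩
  have key : entMat (SimpleGraph.comap f G) S = (entMat G (S.map ⟨f, hf⟩)).submatrix e e := by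
    ext i j
    have h1 : (SimpleGraph.comap f G).Adj i.1 j.1 = G.Adj (f i.1) (f j.1) := rfl
    have h2 : (e i).1 = f i.1 := rfl
    have h3 : (e j).1 = f j.1 := rfl
    simp only [entMat, Matrix.submatrix_apply, Matrix.of_apply, ent]
    rw [h1, h2, h3]
  rw [key, Matrix.rank_submatrix]

variable {V : Type u} [Fintype V] [DecidableEq V] (G : SimpleGraph V) (v w : V)

lemma rankIn_pivot_insert (hne : v ≠ w) (R : Finset V) (hv : v ∉ R) (hw : w ∉ R) :
    rankIn (pivot G v w) (insert v R) = rankIn G (insert v R) := by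
  classical
  rw [rankIn_eq, rankIn_eq]
  set T := insert v R with hT
  have hvT : v ∈ T := Finset.mem_insert_self v R
  let v0 : {x // x ∈ T} := ⟨v, hvT⟩
  let M := entMat G T
  let C : Matrix {x // x ∈ T} {x // x ∈ T} (ZMod 2) :=
    Matrix.of fun x y => if y = v0 ∧ x ≠ v0 then ent G w x.1 else 0
  have memT : ∀ x : {x // x ∈ T}, x ≠ v0 → x.1 ≠ v ∧ x.1 ≠ w := by
    intro x hx
    have hxv : x.1 ≠ v := fun h => hx (Subtype.ext h)
    have hxR : x.1 ∈ R := by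
      rcases Finset.mem_insert.mp x.2 with h | h
      · exact absurd h hxv
      · exact h
    exact ⟨hxv, fun h => hw (h ▸ hxR)⟩
  have hCv0 : ∀ y, C v0 y = 0 := by intro y; simp [C]
  have hCC : C * C = 0 := by
    ext x y
    rw [Matrix.mul_apply]
    rw [show (0 : Matrix {x // x ∈ T} {x // x ∈ T} (ZMod 2)) x y = 0 from rfl]
    apply Finset.sum_eq_zero
    intro k _
    by_cases hk : k = v0
    · subst hk; rw [hCv0, mul_zero]
    · have : C x k = 0 := by simp [C, hk]
      rw [this, zero_mul]
  have hE : (1 + C) * (1 + C) = 1 := by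
    have hC2 : C + C = 0 := by
      ext x y
      rw [Matrix.add_apply, show (0 : Matrix {x // x ∈ T} {x // x ∈ T} (ZMod 2)) x y = 0 from rfl]
      exact CharTwo.add_self_eq_zero _
    calc (1 + C) * (1 + C) = 1 + (C + C) + C * C := by noncomm_ring
      _ = 1 := by rw [hC2, hCC, add_zero, add_zero]
  have hCM : ∀ x y, (C * M) x y = C x v0 * ent G v y.1 := by
    intro x y
    rw [Matrix.mul_apply]
    rw [Finset.sum_eq_single v0]
    · rfl
    · intro k _ hk
      have : C x k = 0 := by simp [C, hk]
      rw [this, zero_mul]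
    · intro h; exact absurd (Finset.mem_univ _) h
  have hMCt : ∀ x y, (M * Cᵀ) x y = ent G x.1 v * C y v0 := by
    intro x y
    rw [Matrix.mul_apply]
    rw [Finset.sum_eq_single v0]
    · rfl
    · intro k _ hk
      have : Cᵀ k y = 0 := by simp [Matrix.transpose_apply, C, hk]
      rw [this, mul_zero]
    · intro h; exact absurd (Finset.mem_univ _) h
  have hCMCt : ∀ x y, (C * M * Cᵀ) x y = 0 := by
    intro x y
    rw [Matrix.mul_apply]
    apply Finset.sum_eq_zero
    intro k _
    by_cases hk : k = v0
    · subst hk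
      rw [hCM]
      have : ent G v v0.1 = 0 := ent_self G v
      rw [this, mul_zero, zero_mul]
    · have : Cᵀ k y = 0 := by simp [Matrix.transpose_apply, C, hk]
      rw [this, mul_zero]
  have key : entMat (pivot G v w) T = (1 + C) * M * (1 + C)ᵀ := by
    have expand : (1 + C) * M * (1 + C)ᵀ = M + C * M + (M * Cᵀ + C * M * Cᵀ) := by
      rw [Matrix.transpose_add, Matrix.transpose_one]
      noncomm_ring
    rw [expand]
    ext x y
    rw [Matrix.add_apply, Matrix.add_apply, Matrix.add_apply, hCM, hMCt, hCMCt, add_zero]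
    by_cases hx : x = v0
    · subst hx
      have h1 : C v0 v0 = 0 := hCv0 v0
      have h2 : ent G v0.1 v = 0 := ent_self G v
      rw [h1, h2, zero_mul, zero_mul, add_zero, add_zero]
      exact ent_pivot_left G v w y.1
    · by_cases hy : y = v0
      · subst hy
        have h1 : C v0 v0 = 0 := hCv0 v0
        have h2 : ent G v v0.1 = 0 := ent_self G v
        rw [h1, h2, mul_zero, mul_zero, add_zero, add_zero]
        show ent (pivot G v w) x.1 v = ent G x.1 v
        rw [ent_comm (pivot G v w) x.1 v, ent_pivot_left G v w x.1, ent_comm G v x.1]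
      · obtain ⟨hxv, hxw⟩ := memT x hx
        obtain ⟨hyv, hyw⟩ := memT y hy
        have h1 : C x v0 = ent G w x.1 := by simp [C, hx]
        have h2 : C y v0 = ent G w y.1 := by simp [C, hy]
        rw [h1, h2]
        show ent (pivot G v w) x.1 y.1 = ent G x.1 y.1 + _ + _
        rw [ent_pivot G v w x.1 y.1 hxv hxw hyv hyw]
        rw [ent_comm G x.1 v]
        ring
  rw [key, aux_rank_conj _ _ hE]

lemma rankIn_two_step (hvw : G.Adj v w) (R : Finset V) (hv : v ∉ R) (hw : w ∉ R) :
    rankIn G (insert v (insert w R)) = rankIn (pivot G v w) R + 2 := by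
  classical
  have hne : v ≠ w := hvw.ne
  set T := insert v (insert w R) with hT
  have hvT : v ∈ T := Finset.mem_insert_self v _
  have hwT : w ∈ T := Finset.mem_insert_of_mem (Finset.mem_insert_self w R)
  let v0 : {x // x ∈ T} := ⟨v, hvT⟩
  let w0 : {x // x ∈ T} := ⟨w, hwT⟩
  have hv0w0 : v0 ≠ w0 := fun h => hne (congrArg Subtype.val h)
  have hw0v0 : w0 ≠ v0 := fun h => hne (congrArg Subtype.val h).symm
  let M := entMat G T
  let N : Matrix {x // x ∈ T} {x // x ∈ T} (ZMod 2) :=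
    Matrix.of fun x y => if x ≠ v0 ∧ x ≠ w0 then
      (if y = v0 then ent G w x.1 else if y = w0 then ent G v x.1 else 0) else 0
  have memT : ∀ x : {x // x ∈ T}, x ≠ v0 → x ≠ w0 → x.1 ∈ R ∧ x.1 ≠ v ∧ x.1 ≠ w := by
    intro x h1 h2
    have hxv : x.1 ≠ v := fun h => h1 (Subtype.ext h)
    have hxw : x.1 ≠ w := fun h => h2 (Subtype.ext h)
    have hxR : x.1 ∈ R := by
      rcases Finset.mem_insert.mp x.2 with h | h
      · exact absurd h hxv
      rcases Finset.mem_insert.mp h with h | h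
      · exact absurd h hxw
      · exact h
    exact ⟨hxR, hxv, hxw⟩
  have hNv0 : ∀ y, N v0 y = 0 := by intro y; simp [N]
  have hNw0 : ∀ y, N w0 y = 0 := by intro y; simp [N]
  have hNz : ∀ x k, k ≠ v0 → k ≠ w0 → N x k = 0 := by
    intro x k h1 h2; simp [N, h1, h2]
  have hNa : ∀ x, x ≠ v0 → x ≠ w0 → N x v0 = ent G w x.1 := by
    intro x h1 h2; simp [N, h1, h2]
  have hNb : ∀ x, x ≠ v0 → x ≠ w0 → N x w0 = ent G v x.1 := by
    intro x h1 h2; simp [N, h1, h2, hw0v0]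
  have sum2 : ∀ f : {x // x ∈ T} → ZMod 2, (∀ k, k ≠ v0 → k ≠ w0 → f k = 0) →
      ∑ k, f k = f v0 + f w0 := by
    intro f hf
    apply Finset.sum_eq_add v0 w0 hv0w0
    · intro c _ hc; exact hf c hc.1 hc.2
    · intro h; exact absurd (Finset.mem_univ _) h
    · intro h; exact absurd (Finset.mem_univ _) h
  have hNN : N * N = 0 := by
    ext x y
    rw [Matrix.mul_apply, show (0 : Matrix {x // x ∈ T} {x // x ∈ T} (ZMod 2)) x y = 0 from rfl]
    apply Finset.sum_eq_zero
    intro k _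
    by_cases h1 : k = v0
    · subst h1; rw [hNv0, mul_zero]
    by_cases h2 : k = w0
    · subst h2; rw [hNw0, mul_zero]
    · rw [hNz x k h1 h2, zero_mul]
  have hFF : (1 + N) * (1 + N) = 1 := by
    have hN2 : N + N = 0 := by
      ext x y
      rw [Matrix.add_apply, show (0 : Matrix {x // x ∈ T} {x // x ∈ T} (ZMod 2)) x y = 0 from rfl]
      exact CharTwo.add_self_eq_zero _
    calc (1 + N) * (1 + N) = 1 + (N + N) + N * N := by noncomm_ring
      _ = 1 := by rw [hN2, hNN, add_zero, add_zero]
  have hNM : ∀ x y, (N * M) x y = N x v0 * ent G v y.1 + N x w0 * ent G w y.1 := by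
    intro x y
    rw [Matrix.mul_apply]
    rw [sum2 _ (fun k hk1 hk2 => by rw [hNz x k hk1 hk2, zero_mul])]
    rfl
  have hMNt : ∀ x y, (M * Nᵀ) x y = ent G x.1 v * N y v0 + ent G x.1 w * N y w0 := by
    intro x y
    rw [Matrix.mul_apply]
    rw [sum2 _ (fun k hk1 hk2 => by
      rw [show Nᵀ k y = N y k from rfl, hNz y k hk1 hk2, mul_zero])]
    rfl
  have hgvv : ent G v v = 0 := ent_self G v
  have hgww : ent G w w = 0 := ent_self G w
  have hgvw : ent G v w = 1 := ent_one G hvw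
  have hgwv : ent G w v = 1 := ent_one G hvw.symm
  have hNMNt : ∀ x y, (N * M * Nᵀ) x y = N x w0 * N y v0 + N x v0 * N y w0 := by
    intro x y
    rw [Matrix.mul_apply]
    rw [sum2 _ (fun k hk1 hk2 => by
      rw [show Nᵀ k y = N y k from rfl, hNz y k hk1 hk2, mul_zero])]
    rw [show Nᵀ v0 y = N y v0 from rfl, show Nᵀ w0 y = N y w0 from rfl]
    rw [hNM, hNM]
    rw [show ent G v v0.1 = ent G v v from rfl, show ent G w v0.1 = ent G w v from rfl,
      show ent G v w0.1 = ent G v w from rfl, show ent G w w0.1 = ent G w w from rfl]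
    rw [hgvv, hgww, hgvw, hgwv]
    ring
  let Db : Matrix {x // x ∈ T} {x // x ∈ T} (ZMod 2) :=
    Matrix.of fun x y => if x ≠ v0 ∧ x ≠ w0 then
      (if y ≠ v0 ∧ y ≠ w0 then ent (pivot G v w) x.1 y.1 else 0)
      else (if y ≠ v0 ∧ y ≠ w0 then 0 else ent G x.1 y.1)
  have htwo : (2 : ZMod 2) = 0 := rfl
  have key : (1 + N) * M * (1 + N)ᵀ = Db := by
    have expand : (1 + N) * M * (1 + N)ᵀ = M + N * M + (M * Nᵀ + N * M * Nᵀ) := by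
      rw [Matrix.transpose_add, Matrix.transpose_one]
      noncomm_ring
    rw [expand]
    ext x y
    rw [Matrix.add_apply, Matrix.add_apply, Matrix.add_apply, hNM, hMNt, hNMNt]
    by_cases hx1 : x = v0
    · subst hx1
      rw [hNv0, hNv0]
      by_cases hy1 : y = v0
      · subst hy1
        rw [hNv0, hNv0]
        show ent G v v + (0 * _ + 0 * _) + ((ent G v v * 0 + ent G v w * 0) + (0 * 0 + 0 * 0))
          = Db v0 v0
        rw [show Db v0 v0 = ent G v v from by simp [Db]; rfl]
        ring
      by_cases hy2 : y = w0
      · subst hy2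
        rw [hNw0, hNw0]
        show ent G v w + (0 * _ + 0 * _) + ((ent G v v * 0 + ent G v w * 0) + (0 * 0 + 0 * 0))
          = Db v0 w0
        rw [show Db v0 w0 = ent G v w from by simp [Db]; rfl]
        ring
      · rw [hNa y hy1 hy2, hNb y hy1 hy2]
        show ent G v y.1 + (0 * _ + 0 * _) +
          ((ent G v v * ent G w y.1 + ent G v w * ent G v y.1) +
            (0 * ent G w y.1 + 0 * ent G v y.1)) = Db v0 y
        rw [show Db v0 y = 0 from by simp [Db, hy1, hy2]]
        rw [hgvv, hgvw]
        linear_combination ent G v y.1 * htwo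
    by_cases hx2 : x = w0
    · subst hx2
      rw [hNw0, hNw0]
      by_cases hy1 : y = v0
      · subst hy1
        rw [hNv0, hNv0]
        show ent G w v + (0 * _ + 0 * _) + ((ent G w v * 0 + ent G w w * 0) + (0 * 0 + 0 * 0))
          = Db w0 v0
        rw [show Db w0 v0 = ent G w v from by simp [Db, hw0v0]; rfl]
        ring
      by_cases hy2 : y = w0
      · subst hy2
        rw [hNw0, hNw0]
        show ent G w w + (0 * _ + 0 * _) + ((ent G w v * 0 + ent G w w * 0) + (0 * 0 + 0 * 0))
          = Db w0 w0
        rw [show Db w0 w0 = ent G w w from by simp [Db, hw0v0]; rfl]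
        ring
      · rw [hNa y hy1 hy2, hNb y hy1 hy2]
        show ent G w y.1 + (0 * _ + 0 * _) +
          ((ent G w v * ent G w y.1 + ent G w w * ent G v y.1) +
            (0 * ent G w y.1 + 0 * ent G v y.1)) = Db w0 y
        rw [show Db w0 y = 0 from by simp [Db, hw0v0, hy1, hy2]]
        rw [hgwv, hgww]
        linear_combination ent G w y.1 * htwo
    · obtain ⟨hxR, hxv, hxw⟩ := memT x hx1 hx2
      rw [hNa x hx1 hx2, hNb x hx1 hx2]
      by_cases hy1 : y = v0
      · subst hy1
        rw [hNv0, hNv0]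
        show ent G x.1 v + (ent G w x.1 * ent G v v + ent G v x.1 * ent G w v) +
          ((ent G x.1 v * 0 + ent G x.1 w * 0) + (ent G v x.1 * 0 + ent G w x.1 * 0)) = Db x v0
        rw [show Db x v0 = 0 from by simp [Db, hx1, hx2]]
        rw [hgvv, hgwv, ent_comm G x.1 v]
        linear_combination ent G v x.1 * htwo
      by_cases hy2 : y = w0
      · subst hy2
        rw [hNw0, hNw0]
        show ent G x.1 w + (ent G w x.1 * ent G v w + ent G v x.1 * ent G w w) +
          ((ent G x.1 v * 0 + ent G x.1 w * 0) + (ent G v x.1 * 0 + ent G w x.1 * 0)) = Db x w0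
        rw [show Db x w0 = 0 from by simp [Db, hx1, hx2]]
        rw [hgvw, hgww, ent_comm G x.1 w]
        linear_combination ent G w x.1 * htwo
      · obtain ⟨hyR, hyv, hyw⟩ := memT y hy1 hy2
        rw [hNa y hy1 hy2, hNb y hy1 hy2]
        show ent G x.1 y.1 + (ent G w x.1 * ent G v y.1 + ent G v x.1 * ent G w y.1) +
          ((ent G x.1 v * ent G w y.1 + ent G x.1 w * ent G v y.1) +
            (ent G v x.1 * ent G w y.1 + ent G w x.1 * ent G v y.1)) = Db x y
        rw [show Db x y = ent (pivot G v w) x.1 y.1 from by simp [Db, hx1, hx2, hy1, hy2]]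
        rw [ent_pivot G v w x.1 y.1 hxv hxw hyv hyw]
        rw [ent_comm G x.1 v, ent_comm G x.1 w]
        linear_combination (ent G w x.1 * ent G v y.1 + ent G v x.1 * ent G w y.1) * htwo
  -- the block structure
  let B2 : Matrix (Fin 2) (Fin 2) (ZMod 2) := !![0, 1; 1, 0]
  have hB2 : B2.rank = 2 := by
    have hdet : IsUnit B2.det := by
      have hd : B2.det = 1 := by
        rw [show B2 = !![0, 1; 1, 0] from rfl, Matrix.det_fin_two_of]
        decide
      rw [hd]; exact isUnit_one
    rw [Matrix.rank_of_isUnit B2 ((Matrix.isUnit_iff_isUnit_det B2).mpr hdet)]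
    simp
  let g : ({x // x ∈ R} ⊕ Fin 2) → {x // x ∈ T} :=
    Sum.elim (fun x => ⟨x.1, Finset.mem_insert_of_mem (Finset.mem_insert_of_mem x.2)⟩)
      ![v0, w0]
  have hgR : ∀ x : {x // x ∈ R}, (g (Sum.inl x)) ≠ v0 ∧ (g (Sum.inl x)) ≠ w0 := by
    intro x
    constructor
    · intro h
      have hxv : (x.1 : V) ∈ R := x.2
      have heq : (x.1 : V) = v := congrArg Subtype.val h
      rw [heq] at hxv; exact hv hxv
    · intro h
      have hxv : (x.1 : V) ∈ R := x.2
      have heq : (x.1 : V) = w := congrArg Subtype.val h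
      rw [heq] at hxv; exact hw hxv
  have hg : Function.Bijective g := by
    constructor
    · rintro (x | i) (y | j) h
      · have hval := congrArg Subtype.val h
        exact congrArg Sum.inl (Subtype.ext hval)
      · exfalso
        fin_cases j
        · exact (hgR x).1 (by simpa [g] using h)
        · exact (hgR x).2 (by simpa [g] using h)
      · exfalso
        fin_cases i
        · exact (hgR y).1 (by simpa [g] using h.symm)
        · exact (hgR y).2 (by simpa [g] using h.symm)
      · fin_cases i <;> fin_cases j
        · rfl
        · exact absurd (by simpa [g] using h) hv0w0
        · exact absurd (by simpa [g] using h) hw0v0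
        · rfl
    · intro x
      by_cases hx1 : x = v0
      · exact ⟨Sum.inr 0, by simp [g, hx1]⟩
      by_cases hx2 : x = w0
      · exact ⟨Sum.inr 1, by simp [g, hx2]⟩
      · obtain ⟨hxR, -, -⟩ := memT x hx1 hx2
        exact ⟨Sum.inl ⟨x.1, hxR⟩, Subtype.ext rfl⟩
  let e := Equiv.ofBijective g hg
  have hsub : Db.submatrix e e = Matrix.fromBlocks (entMat (pivot G v w) R) 0 0 B2 := by
    ext i j
    rcases i with x | i <;> rcases j with y | j
    · have h1 := hgR x
      have h2 := hgR y
      show Db (g (Sum.inl x)) (g (Sum.inl y)) = ent (pivot G v w) x.1 y.1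
      rw [show Db (g (Sum.inl x)) (g (Sum.inl y))
        = ent (pivot G v w) (g (Sum.inl x)).1 (g (Sum.inl y)).1 from by
          simp [Db, h1.1, h1.2, h2.1, h2.2]]
      rfl
    · have h1 := hgR x
      fin_cases j
      · show Db (g (Sum.inl x)) v0 = 0
        simp [Db, h1.1, h1.2]
      · show Db (g (Sum.inl x)) w0 = 0
        simp [Db, h1.1, h1.2]
    · have h2 := hgR y
      fin_cases i
      · show Db v0 (g (Sum.inl y)) = 0
        simp [Db, h2.1, h2.2]
      · show Db w0 (g (Sum.inl y)) = 0
        simp [Db, h2.1, h2.2]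
    · fin_cases i <;> fin_cases j
      · show Db v0 v0 = B2 0 0
        rw [show B2 0 0 = 0 from rfl]
        simp [Db, hgvv]; exact hgvv
      · show Db v0 w0 = B2 0 1
        rw [show B2 0 1 = 1 from rfl]
        simp [Db, hgvw]; exact hgvw
      · show Db w0 v0 = B2 1 0
        rw [show B2 1 0 = 1 from rfl]
        simp [Db, hgwv]; exact hgwv
      · show Db w0 w0 = B2 1 1
        rw [show B2 1 1 = 0 from rfl]
        simp [Db, hgww]; exact hgww
  have hcard : Fintype.card (Fin 2) = 2 := by simp
  calc rankIn G T = M.rank := rankIn_eq G T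
    _ = ((1 + N) * M * (1 + N)ᵀ).rank := (aux_rank_conj M _ hFF).symm
    _ = Db.rank := by rw [key]
    _ = (Db.submatrix e e).rank := (Matrix.rank_submatrix Db e e).symm
    _ = (entMat (pivot G v w) R).rank + B2.rank := by
        rw [hsub, aux_rank_fromBlocks_diag]
    _ = rankIn (pivot G v w) R + 2 := by rw [hB2, rankIn_eq]

end AuxRank

section AuxSum
open Matrix Module Finset Polynomial

lemma qNull_del {V : Type u} [Fintype V] [DecidableEq V] (G : SimpleGraph V) (v : V) :
    qNull (delVert G v) = ∑ T ∈ ((Finset.univ : Finset V).erase v).powerset,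
      ((X : Polynomial ℤ) - 1) ^ (T.card - rankIn G T) := by
  classical
  unfold qNull
  apply Finset.sum_bij (fun (S : Finset {x : V // x ≠ v}) (_ : S ∈ Finset.univ) =>
    S.map (Function.Embedding.subtype _))
  · intro S _
    rw [Finset.mem_powerset]
    intro x hx
    rw [Finset.mem_map] at hx
    obtain ⟨a, -, rfl⟩ := hx
    exact Finset.mem_erase.mpr ⟨a.2, Finset.mem_univ _⟩
  · intro a _ b _ h
    exact Finset.map_injective _ h
  · intro T hT
    refine ⟨T.subtype _, Finset.mem_univ _, ?_⟩
    rw [Finset.subtype_map]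
    apply Finset.filter_true_of_mem
    intro x hx
    exact (Finset.mem_erase.mp (Finset.mem_powerset.mp hT hx)).1
  · intro S _
    have hrk : rankIn (delVert G v) S
        = rankIn G (S.map (Function.Embedding.subtype _)) :=
      rankIn_comap Subtype.val Subtype.coe_injective G S
    rw [Finset.card_map, hrk]

theorem qNull_pivot {V : Type u} [Fintype V] [DecidableEq V]
    (G : SimpleGraph V) {v w : V} (hvw : G.Adj v w) :
    qNull G = qNull (delVert G v) + qNull (delVert (pivot G v w) w) := by
  classical
  have hne : v ≠ w := hvw.ne
  set U := ((Finset.univ : Finset V).erase v).erase w with hU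
  have hUv : v ∉ U := fun h => (Finset.mem_erase.mp (Finset.mem_erase.mp h).2).1 rfl
  have hUw : w ∉ U := fun h => (Finset.mem_erase.mp h).1 rfl
  have hU1 : (Finset.univ : Finset V).erase v = insert w U := by
    rw [hU]
    exact (Finset.insert_erase (Finset.mem_erase.mpr ⟨Ne.symm hne, Finset.mem_univ w⟩)).symm
  have hU2 : (Finset.univ : Finset V).erase w = insert v U := by
    rw [hU, Finset.erase_right_comm]
    exact (Finset.insert_erase (Finset.mem_erase.mpr ⟨hne, Finset.mem_univ v⟩)).symm
  have huniv : (Finset.univ : Finset V) = insert v (insert w U) := by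
    rw [← hU1]
    exact (Finset.insert_erase (Finset.mem_univ v)).symm
  have hvwU : v ∉ insert w U := by
    rw [Finset.mem_insert]
    push_neg
    exact ⟨hne, hUv⟩
  -- expand qNull G
  have e0 : qNull G = ∑ S ∈ (Finset.univ : Finset V).powerset,
      ((X : Polynomial ℤ) - 1) ^ (S.card - rankIn G S) := by
    unfold qNull
    rw [Finset.powerset_univ]
  rw [e0, huniv, Finset.sum_powerset_insert hvwU,
    Finset.sum_powerset_insert hUw, Finset.sum_powerset_insert hUw]
  rw [qNull_del G v, qNull_del (pivot G v w) w, hU1, hU2,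
    Finset.sum_powerset_insert hUw, Finset.sum_powerset_insert hUv]
  -- pointwise identities
  have key1 : ∑ R ∈ U.powerset, ((X : Polynomial ℤ) - 1) ^ ((insert v R).card - rankIn G (insert v R))
      = ∑ R ∈ U.powerset,
        ((X : Polynomial ℤ) - 1) ^ ((insert v R).card - rankIn (pivot G v w) (insert v R)) := by
    apply Finset.sum_congr rfl
    intro R hR
    have hRU : R ⊆ U := Finset.mem_powerset.mp hR
    have hvR : v ∉ R := fun h => hUv (hRU h)
    have hwR : w ∉ R := fun h => hUw (hRU h)
    rw [rankIn_pivot_insert G v w hne R hvR hwR]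
  have key2 : ∑ R ∈ U.powerset,
      ((X : Polynomial ℤ) - 1) ^ ((insert v (insert w R)).card - rankIn G (insert v (insert w R)))
      = ∑ R ∈ U.powerset, ((X : Polynomial ℤ) - 1) ^ (R.card - rankIn (pivot G v w) R) := by
    apply Finset.sum_congr rfl
    intro R hR
    have hRU : R ⊆ U := Finset.mem_powerset.mp hR
    have hvR : v ∉ R := fun h => hUv (hRU h)
    have hwR : w ∉ R := fun h => hUw (hRU h)
    have hvwR : v ∉ insert w R := by
      rw [Finset.mem_insert]; push_neg; exact ⟨hne, hvR⟩
    have hcard : (insert v (insert w R)).card = R.card + 2 := by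
      rw [Finset.card_insert_of_notMem hvwR, Finset.card_insert_of_notMem hwR]
    rw [hcard, rankIn_two_step G v w hvw R hvR hwR, Nat.add_sub_add_right]
  rw [key1, key2]
  ring

end AuxSum

/-- If `vw` is an edge of `G`, then `γ(G) = γ(G - v) + γ(G^{vw} - w)`. -/
theorem gamma_pivot_reduction {V : Type u} [Fintype V] [DecidableEq V]
    (G : SimpleGraph V) {v w : V} (hvw : G.Adj v w) :
    gammaInv G = gammaInv (delVert G v) + gammaInv (delVert (pivot G v w) w) := by
  unfold gammaInv
  rw [qNull_pivot G hvw, Polynomial.coeff_add]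
end

section
/- Let G be a finite simple connected graph with at least one vertex. Then γ(G) = 1 if and only if G consists of a single vertex. -/
open Polynomial

universe u

variable {V : Type u}

section Auxiliary

open Module

universe v

/-- Key lemma: for an alternating bilinear form on a finite-dimensional space,
the corank of the radical is even. -/
lemma even_finrank_sub_radical {K : Type*} [Field K] (k : ℕ) :
    ∀ {V : Type v} [AddCommGroup V] [Module K V] [FiniteDimensional K V]
      (B : LinearMap.BilinForm K V), B.IsAlt → Module.finrank K V ≤ k →
      Even (Module.finrank K V -
        Module.finrank K (B.orthogonal (⊤ : Submodule K V) : Submodule K V)) := by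
  induction k with
  | zero =>
    intro V _ _ _ B _ hk
    have h0 : Module.finrank K V = 0 := Nat.le_zero.mp hk
    simp [h0]
  | succ k ih =>
    intro V _ _ _ B hB hk
    by_cases h0 : ∀ x y : V, B x y = 0
    · have htop : B.orthogonal (⊤ : Submodule K V) = ⊤ := by
        ext z
        simp [LinearMap.BilinForm.mem_orthogonal_iff, LinearMap.BilinForm.IsOrtho, h0]
      rw [htop]
      simp [finrank_top]
    · push_neg at h0
      obtain ⟨x, y, hxy⟩ := h0
      have hrefl : B.IsRefl := hB.isRefl
      have hyx : B y x ≠ 0 := fun h => hxy (hrefl y x h)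
      have key : ∀ (s t : K) (z : V), B (s • x + t • y) z = s * B x z + t * B y z := by
        intro s t z
        simp [smul_eq_mul]
      have hli : LinearIndependent K ![x, y] := by
        rw [LinearIndependent.pair_iff]
        intro s t hst
        have h1 : s * B x y + t * B y y = 0 := by rw [← key, hst]; simp
        have h2 : s * B x x + t * B y x = 0 := by rw [← key, hst]; simp
        rw [hB y, mul_zero, add_zero] at h1
        rw [hB x, mul_zero, zero_add] at h2
        exact ⟨by rcases mul_eq_zero.mp h1 with h | h; exact h; exact absurd h hxy,
          by rcases mul_eq_zero.mp h2 with h | h; exact h; exact absurd h hyx⟩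
      set W := Submodule.span K ({x, y} : Set V) with hWdef
      have hxW : x ∈ W := Submodule.subset_span (by simp)
      have hyW : y ∈ W := Submodule.subset_span (by simp)
      have hrange : Set.range ![x, y] = ({x, y} : Set V) := by
        ext z
        constructor
        · rintro ⟨i, rfl⟩
          fin_cases i <;> simp
        · rintro (rfl | rfl)
          · exact ⟨0, rfl⟩
          · exact ⟨1, rfl⟩
      have hW2 : Module.finrank K W = 2 := by
        have h := finrank_span_eq_card hli
        rw [hrange] at h
        simpa using h
      have hndW : (B.restrict W).Nondegenerate := by
        suffices hL : LinearMap.SeparatingLeft (B.restrict W) from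
          ⟨hL, fun z hz => hL z (fun n => hrefl _ _ (hz n))⟩
        rintro ⟨z, hz⟩ hzero
        obtain ⟨a, b, rfl⟩ := Submodule.mem_span_pair.mp hz
        have e1 : B (a • x + b • y) y = 0 := by simpa using hzero ⟨y, hyW⟩
        have e2 : B (a • x + b • y) x = 0 := by simpa using hzero ⟨x, hxW⟩
        rw [key, hB y, mul_zero, add_zero] at e1
        rw [key, hB x, mul_zero, zero_add] at e2
        have ha : a = 0 := by
          rcases mul_eq_zero.mp e1 with h | h
          · exact h
          · exact absurd h hxy
        have hb : b = 0 := by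
          rcases mul_eq_zero.mp e2 with h | h
          · exact h
          · exact absurd h hyx
        simp [ha, hb]
      have hcompl : IsCompl W (B.orthogonal W) :=
        LinearMap.BilinForm.isCompl_orthogonal_of_restrict_nondegenerate hrefl hndW
      set W' := B.orthogonal W with hW'def
      have hsum : Module.finrank K W + Module.finrank K W' = Module.finrank K V :=
        Submodule.finrank_add_eq_of_isCompl hcompl
      have hB' : (B.restrict W').IsAlt := by
        intro w
        simpa using hB (w : V)
      have hradmap : (((B.restrict W').orthogonal (⊤ : Submodule K W')).map W'.subtype)
          = B.orthogonal (⊤ : Submodule K V) := by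
        ext z
        constructor
        · rintro ⟨⟨w, hw⟩, hw2, rfl⟩
          intro v _
          obtain ⟨u, w2, hu, hw2', rfl⟩ :=
            Submodule.codisjoint_iff_exists_add_eq.mp hcompl.codisjoint v
          have h1 : B u w = 0 := hw u hu
          have h2 : B w2 w = 0 := by simpa using hw2 ⟨w2, hw2'⟩ Submodule.mem_top
          show B (u + w2) w = 0
          rw [map_add, LinearMap.add_apply, h1, h2, add_zero]
        · intro hz
          have hzW' : z ∈ W' := fun n _ => hz n Submodule.mem_top
          refine ⟨⟨z, hzW'⟩, ?_, rfl⟩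
          rintro ⟨w, hw⟩ -
          show B w z = 0
          exact hz w Submodule.mem_top
      have hfr : Module.finrank K (B.orthogonal (⊤ : Submodule K V) : Submodule K V)
          = Module.finrank K
            ((B.restrict W').orthogonal (⊤ : Submodule K W') : Submodule K W') := by
        rw [← hradmap, Submodule.finrank_map_subtype_eq]
      have hle : Module.finrank K W' ≤ k := by omega
      obtain ⟨c, hc⟩ := ih (B.restrict W') hB' hle
      have hle2 : Module.finrank K
            ((B.restrict W').orthogonal (⊤ : Submodule K W') : Submodule K W')
          ≤ Module.finrank K W' := Submodule.finrank_le _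
      exact ⟨c + 1, by omega⟩

/-- A symmetric matrix with zero diagonal over `F_2` has even rank. -/
lemma even_rank_of_symm_diag {n : Type v} [Fintype n] (M : Matrix n n (ZMod 2))
    (hsymm : ∀ i j, M i j = M j i) (hdiag : ∀ i, M i i = 0) : Even M.rank := by
  classical
  set B : LinearMap.BilinForm (ZMod 2) (n → ZMod 2) := Matrix.toLinearMap₂' (ZMod 2) M
    with hBdef
  have happ : ∀ v w, B v w = dotProduct v (M.mulVec w) := fun v w =>
    Matrix.toLinearMap₂'_apply' M v w
  have halt : B.IsAlt := by
    intro v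
    rw [hBdef, Matrix.toLinearMap₂'_apply, ← Finset.sum_product']
    refine Finset.sum_ninvolution Prod.swap ?_ ?_ (fun p => Finset.mem_univ _)
      (fun p => Prod.swap_swap p)
    · intro p
      show v p.1 • v p.2 • M p.1 p.2 + v p.2 • v p.1 • M p.2 p.1 = 0
      rw [hsymm p.2 p.1, smul_eq_mul, smul_eq_mul, smul_eq_mul, smul_eq_mul]
      have h : v p.2 * (v p.1 * M p.1 p.2) = v p.1 * (v p.2 * M p.1 p.2) := by ring
      rw [h, CharTwo.add_self_eq_zero]
    · intro p hne hswap
      apply hne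
      have h12 : p.2 = p.1 := congrArg Prod.fst hswap
      show v p.1 • v p.2 • M p.1 p.2 = 0
      rw [← h12, hdiag]
      simp
  have hker : B.orthogonal (⊤ : Submodule (ZMod 2) (n → ZMod 2)) = LinearMap.ker M.mulVecLin := by
    ext u
    simp only [LinearMap.BilinForm.mem_orthogonal_iff, Submodule.mem_top, true_implies,
      LinearMap.mem_ker, Matrix.mulVecLin_apply]
    constructor
    · intro h
      funext i
      have hi := h (Pi.single i 1)
      rw [happ, single_dotProduct, one_mul] at hi
      exact hi
    · intro h w
      rw [happ, h, dotProduct_zero]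
  have hrn := LinearMap.finrank_range_add_finrank_ker M.mulVecLin
  have hpi : Module.finrank (ZMod 2) (n → ZMod 2) = Fintype.card n := Module.finrank_pi _
  have heven := even_finrank_sub_radical (K := ZMod 2) (Fintype.card n) B halt (le_of_eq hpi)
  rw [hker, hpi] at heven
  rw [hpi] at hrn
  obtain ⟨c, hc⟩ := heven
  have hrank : M.rank = Module.finrank (ZMod 2) (LinearMap.range M.mulVecLin) := rfl
  exact ⟨c, by rw [hrank]; omega⟩

lemma even_rankIn [Fintype V] (G : SimpleGraph V) (S : Finset V) : Even (rankIn G S) := by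
  classical
  unfold rankIn
  refine even_rank_of_symm_diag _ (fun i j => ?_) (fun i => ?_)
  · simp only [Matrix.submatrix_apply, SimpleGraph.adjMatrix_apply]
    congr 1
    exact propext (G.adj_comm _ _)
  · simp [Matrix.submatrix_apply]

lemma rankIn_le [Fintype V] (G : SimpleGraph V) (S : Finset V) : rankIn G S ≤ S.card := by
  unfold rankIn
  refine le_trans (Matrix.rank_le_card_width _) ?_
  exact le_of_eq (Fintype.card_coe S)

lemma coeff_one_pow_cast (m : ℕ) :
    (((((X : Polynomial ℤ) - 1) ^ m).coeff 1 : ℤ) : ZMod 2) = (m : ZMod 2) := by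
  have h : ((X : Polynomial ℤ) - 1) = X + C (-1) := by
    rw [map_neg, map_one]
    ring
  rw [h, Polynomial.coeff_X_add_C_pow, Nat.choose_one_right]
  push_cast
  rw [show ((-1 : ZMod 2)) = 1 by decide, one_pow, one_mul]

lemma even_sum_card {V : Type u} [Fintype V] (h2 : 2 ≤ Fintype.card V) :
    Even (∑ S : Finset V, S.card) := by
  classical
  have hinv : Function.Involutive (fun S : Finset V => Sᶜ) := fun S => compl_compl S
  have hcompl : ∑ S : Finset V, Sᶜ.card = ∑ S : Finset V, S.card :=
    Fintype.sum_bijective _ hinv.bijective (fun S => Sᶜ.card) (fun T => T.card)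
      (fun S => rfl)
  have hdouble : (∑ S : Finset V, S.card) + (∑ S : Finset V, S.card)
      = 2 ^ Fintype.card V * Fintype.card V := by
    nth_rewrite 1 [← hcompl]
    rw [← Finset.sum_add_distrib]
    simp [Finset.card_compl_add_card, Finset.sum_const, Finset.card_univ,
      Fintype.card_finset]
  obtain ⟨n, hn⟩ : ∃ n, Fintype.card V = n + 2 := ⟨Fintype.card V - 2, by omega⟩
  have hval : 2 ^ Fintype.card V * Fintype.card V = 2 * (2 ^ (n + 1) * (n + 2)) := by
    rw [hn]; ring
  refine ⟨2 ^ n * (n + 2), ?_⟩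
  have : 2 * (2 ^ (n + 1) * (n + 2)) = 2 * ((2 ^ n * (n + 2)) + (2 ^ n * (n + 2))) := by
    ring
  omega

end Auxiliary

/-- For a finite simple connected graph, `γ(G) = 1` if and only if `G` is a single vertex. -/
theorem gamma_eq_one_iff {V : Type u} [Fintype V] (G : SimpleGraph V) (hG : G.Connected) :
    gammaInv G = 1 ↔ Fintype.card V = 1 := by
  classical
  constructor
  · intro hγ
    by_contra hne
    have hV : 1 ≤ Fintype.card V := Fintype.card_pos_iff.mpr hG.nonempty
    have h2 : 2 ≤ Fintype.card V := by omega
    have hterm : ∀ S : Finset V, ((S.card - rankIn G S : ℕ) : ZMod 2) = (S.card : ZMod 2) := by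
      intro S
      rw [Nat.cast_sub (rankIn_le G S)]
      obtain ⟨c, hc⟩ := even_rankIn G S
      have hcc : ((c : ZMod 2) + c) = 0 := by
        rw [← two_mul, show (2 : ZMod 2) = 0 by decide, zero_mul]
      rw [hc, Nat.cast_add, hcc, sub_zero]
    have hsum : ((gammaInv G : ℤ) : ZMod 2)
        = ∑ S : Finset V, ((S.card - rankIn G S : ℕ) : ZMod 2) := by
      rw [gammaInv, qNull, Polynomial.finset_sum_coeff]
      push_cast
      exact Finset.sum_congr rfl fun S _ => coeff_one_pow_cast _
    rw [hγ] at hsum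
    have hsum2 : (1 : ZMod 2) = ((∑ S : Finset V, S.card : ℕ) : ZMod 2) := by
      rw [Nat.cast_sum]
      simpa [hterm] using hsum
    obtain ⟨c, hc⟩ := even_sum_card h2
    rw [hc, Nat.cast_add, ← two_mul, show (2 : ZMod 2) = 0 by decide, zero_mul] at hsum2
    exact one_ne_zero hsum2
  · intro h1
    obtain ⟨v, hv⟩ := Fintype.card_eq_one_iff.mp h1
    have huniv : (Finset.univ : Finset (Finset V)) = {∅, {v}} := by
      ext S
      simp only [Finset.mem_univ, true_iff, Finset.mem_insert, Finset.mem_singleton]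
      rcases S.eq_empty_or_nonempty with h | ⟨x, hx⟩
      · exact Or.inl h
      · right
        ext y
        simp only [Finset.mem_singleton]
        constructor
        · intro _
          exact hv y
        · intro _
          have hyx : y = x := (hv y).trans (hv x).symm
          rw [hyx]
          exact hx
    have hrank : rankIn G {v} = 0 := by
      unfold rankIn
      have hM : ((SimpleGraph.adjMatrix (ZMod 2) G).submatrix
          (fun i : ({v} : Finset V) => (i : V)) (fun i : ({v} : Finset V) => (i : V))) = 0 := by
        ext i j
        have hij : (i : V) = (j : V) := (hv i).trans (hv j).symm
        simp [Matrix.submatrix_apply, SimpleGraph.adjMatrix_apply, hij]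
      rw [hM, Matrix.rank_zero]
    have hne : (∅ : Finset V) ∉ ({({v} : Finset V)} : Finset (Finset V)) := by
      simp only [Finset.mem_singleton]
      exact fun h => Finset.singleton_ne_empty v h.symm
    rw [gammaInv, qNull, huniv, Finset.sum_insert hne, Finset.sum_singleton, hrank]
    simp [Polynomial.coeff_sub, Polynomial.coeff_one]
end

section
/- Let uv be an edge of a finite simple graph G and let w be a vertex of G distinct from u and v. Then w is pendant on u in G (i.e. u is the unique neighbor of w in G) if and only if w is a false twin of v in the pivot G^{uv} (i.e. w and v are non-adjacent in G^{uv} and have exactly the same neighbors in G^{uv}). Moreover, if u and v are true twins in G (i.e. u and v are adjacent and every vertex other than u and v is adjacent to u if and only if it is adjacent to v), then G^{uv} = G. -/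
open Polynomial

universe u

variable {V : Type u}

section PivotHelpers

variable {V : Type u} (G : SimpleGraph V) (u v : V)

lemma notToggle_u (x : V) : ¬ pivotToggle G u v x u := by
  simp [pivotToggle, pivotToggleHalf, adjOnly, adjBoth]

lemma notToggle_v (x : V) : ¬ pivotToggle G u v x v := by
  simp [pivotToggle, pivotToggleHalf, adjOnly, adjBoth]

lemma toggle_symm {x y : V} (h : pivotToggle G u v x y) : pivotToggle G u v y x :=
  Or.elim h Or.inr Or.inl

lemma pivot_adj_of_not_toggle {x y : V} (hT : ¬ pivotToggle G u v x y) :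
    (pivot G u v).Adj x y ↔ G.Adj x y := by
  constructor
  · rintro ⟨hne, (⟨hT', _⟩ | ⟨_, hA⟩)⟩
    · exact absurd hT' hT
    · exact hA
  · intro hA
    exact ⟨hA.ne, Or.inr ⟨hT, hA⟩⟩

lemma pivot_adj_of_toggle {x y : V} (hT : pivotToggle G u v x y) (hne : x ≠ y) :
    (pivot G u v).Adj x y ↔ ¬ G.Adj x y := by
  constructor
  · rintro ⟨_, (⟨_, hNA⟩ | ⟨hT', _⟩)⟩
    · exact hNA
    · exact absurd hT hT'
  · intro hNA
    exact ⟨hne, Or.inl ⟨hT, hNA⟩⟩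

/-- If `w ∈ A_u` then for `x ∉ {u,v,w}` toggling between `w` and `x` happens iff
`x` is adjacent to `v`. -/
lemma toggle_iff_of_adjOnly {w : V} (hw : adjOnly G u v w) {x : V}
    (hxu : x ≠ u) (hxv : x ≠ v) (hxw : x ≠ w) :
    pivotToggle G u v w x ↔ G.Adj v x := by
  obtain ⟨hwu, hwv, hAuw, hAvw⟩ := hw
  constructor
  · rintro ((⟨-, ⟨-, -, h, -⟩⟩ | ⟨-, ⟨-, -, -, h⟩⟩ | ⟨⟨-, -, h', -⟩, -⟩) |
      (⟨-, ⟨-, -, h', -⟩⟩ | ⟨-, ⟨-, -, -, h'⟩⟩ | ⟨-, ⟨-, -, -, h'⟩⟩))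
    · exact h
    · exact h
    · exact absurd h' hAvw
    · exact absurd h' hAvw
    · exact absurd h' hAvw
    · exact absurd h' hAvw
  · intro hAvx
    by_cases hAux : G.Adj u x
    · exact Or.inl (Or.inr (Or.inl ⟨⟨hwu, hwv, hAuw, hAvw⟩, ⟨hxu, hxv, hAux, hAvx⟩⟩))
    · exact Or.inl (Or.inl ⟨⟨hwu, hwv, hAuw, hAvw⟩, ⟨hxv, hxu, hAvx, hAux⟩⟩)

end PivotHelpers

/-- Duality of pendant and twin vertices under pivoting: for an edge `uv` of `G` and a
vertex `w ∉ {u, v}`, `w` is pendant on `u` in `G` iff `w` is a false twin of `v` in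
`G^{uv}`; moreover if `u` and `v` are true twins in `G` then `G^{uv} = G`. -/
theorem pendant_falseTwin_duality {V : Type u} (G : SimpleGraph V) {u v w : V}
    (huv : G.Adj u v) (hwu : w ≠ u) (hwv : w ≠ v) :
    (G.neighborSet w = {u} ↔
      ¬ (pivot G u v).Adj w v ∧
        (pivot G u v).neighborSet w = (pivot G u v).neighborSet v) ∧
    ((∀ x, x ≠ u → x ≠ v → (G.Adj x u ↔ G.Adj x v)) → pivot G u v = G) := by
  have huvne : u ≠ v := huv.ne
  have hPwv : (pivot G u v).Adj w v ↔ G.Adj w v :=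
    pivot_adj_of_not_toggle G u v (notToggle_v G u v w)
  have hPwu : (pivot G u v).Adj w u ↔ G.Adj w u :=
    pivot_adj_of_not_toggle G u v (notToggle_u G u v w)
  have hPv : ∀ x, (pivot G u v).Adj v x ↔ G.Adj v x := fun x =>
    pivot_adj_of_not_toggle G u v (fun h => notToggle_v G u v x (toggle_symm G u v h))
  constructor
  · constructor
    · -- pendant → false twin in pivot
      intro hN
      have hAdj : ∀ x, G.Adj w x ↔ x = u := by
        intro x
        have : x ∈ G.neighborSet w ↔ x ∈ ({u} : Set V) := by rw [hN]
        simpa using this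
      have hwu' : G.Adj w u := (hAdj u).mpr rfl
      have hwv' : ¬ G.Adj w v := fun h => (huvne.symm) ((hAdj v).mp h)
      have hwclass : adjOnly G u v w :=
        ⟨hwu, hwv, hwu'.symm, fun h => hwv' h.symm⟩
      refine ⟨fun h => hwv' (hPwv.mp h), ?_⟩
      ext x
      simp only [SimpleGraph.mem_neighborSet]
      rw [hPv x]
      by_cases hxu : x = u
      · rw [hxu]
        exact iff_of_true (hPwu.mpr hwu') huv.symm
      by_cases hxv : x = v
      · rw [hxv]
        exact iff_of_false (fun h => hwv' (hPwv.mp h)) (G.irrefl)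
      by_cases hxw : x = w
      · rw [hxw]
        exact iff_of_false (pivot G u v).irrefl (fun h => hwv' h.symm)
      · have hT := toggle_iff_of_adjOnly G u v hwclass hxu hxv hxw
        by_cases hvx : G.Adj v x
        · rw [pivot_adj_of_toggle G u v (hT.mpr hvx) (Ne.symm hxw)]
          exact iff_of_true (fun h => hxu ((hAdj x).mp h)) hvx
        · rw [pivot_adj_of_not_toggle G u v (fun h => hvx (hT.mp h))]
          exact iff_of_false (fun h => hxu ((hAdj x).mp h)) hvx
    · -- false twin in pivot → pendant
      rintro ⟨h1, h2⟩
      have hmem : ∀ x, (pivot G u v).Adj w x ↔ (pivot G u v).Adj v x := by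
        intro x
        have : x ∈ (pivot G u v).neighborSet w ↔ x ∈ (pivot G u v).neighborSet v := by
          rw [h2]
        simpa using this
      have hwu' : G.Adj w u := hPwu.mp ((hmem u).mpr ((hPv u).mpr huv.symm))
      have hwv' : ¬ G.Adj w v := fun h => h1 (hPwv.mpr h)
      have hwclass : adjOnly G u v w :=
        ⟨hwu, hwv, hwu'.symm, fun h => hwv' h.symm⟩
      ext x
      simp only [SimpleGraph.mem_neighborSet, Set.mem_singleton_iff]
      constructor
      · intro hwx
        by_contra hxu
        have hxv : x ≠ v := fun h => hwv' (h ▸ hwx)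
        have hxw : x ≠ w := fun h => G.irrefl (h ▸ hwx)
        have hT := toggle_iff_of_adjOnly G u v hwclass hxu hxv hxw
        have hkey := (hmem x).trans (hPv x)
        by_cases hvx : G.Adj v x
        · have := (pivot_adj_of_toggle G u v (hT.mpr hvx) (Ne.symm hxw)).symm.trans hkey
          exact (this.mpr hvx) hwx
        · have := (pivot_adj_of_not_toggle G u v (fun h => hvx (hT.mp h))).symm.trans hkey
          exact hvx (this.mp hwx)
      · rintro rfl
        exact hwu'
  · -- true twins ⟹ pivot = G
    intro htwin
    have hnoT : ∀ x y, ¬ pivotToggle G u v x y := by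
      have hnoA : ∀ x, ¬ adjOnly G u v x ∧ ¬ adjOnly G v u x := by
        intro x
        constructor
        · rintro ⟨hxu, hxv, hA, hNA⟩
          exact hNA (((htwin x hxu hxv).mp hA.symm).symm)
        · rintro ⟨hxv, hxu, hA, hNA⟩
          exact hNA (((htwin x hxu hxv).mpr hA.symm).symm)
      rintro x y ((⟨h, _⟩ | ⟨h, _⟩ | ⟨h, _⟩) | (⟨h, _⟩ | ⟨h, _⟩ | ⟨h, _⟩))
      · exact (hnoA x).1 h
      · exact (hnoA x).1 h
      · exact (hnoA x).2 h
      · exact (hnoA y).1 h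
      · exact (hnoA y).1 h
      · exact (hnoA y).2 h
    ext x y
    exact pivot_adj_of_not_toggle G u v (hnoT x y)
end

section
/- Let G be a finite simple (loopless) graph, let v be a non-isolated vertex of G, and let G'' be the graph obtained from G by adding a false twin w of v. Then q(G'';x,y) = q(G;x,y) + y·(q(G;x,y) − q(G − v; x, y)), where G − v denotes the induced subgraph of G on V ∖ {v}. -/
open Polynomial

universe u

variable {V : Type u}

section AuxLemmas

open Finset

private lemma aux_rank_submatrix_le {K : Type*} [Field K] {m n l : Type*} [Fintype m] [Fintype n]
    [Fintype l] [DecidableEq n] (A : Matrix n n K) (f : m → n) (g : l → n) :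
    (A.submatrix f g).rank ≤ A.rank := by
  have h : A.submatrix f g =
      (1 : Matrix n n K).submatrix f (Equiv.refl n) * A * (1 : Matrix n n K).submatrix (Equiv.refl n) g := by
    rw [Matrix.one_submatrix_mul, Matrix.mul_submatrix_one]
    ext i j
    simp
  rw [h]
  exact le_trans (Matrix.rank_mul_le_left _ _) (Matrix.rank_mul_le_right _ _)

private lemma aux_rank_submatrix_surj {K : Type*} [Field K] {m n : Type*} [Fintype m] [Fintype n]
    [DecidableEq m] [DecidableEq n] (A : Matrix n n K) (f : m → n)
    (hf : Function.Surjective f) :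
    (A.submatrix f f).rank = A.rank := by
  refine le_antisymm (aux_rank_submatrix_le A f f) ?_
  have h : A = (A.submatrix f f).submatrix (Function.surjInv hf) (Function.surjInv hf) := by
    ext i j
    simp [Function.surjInv_eq hf]
  conv_lhs => rw [h]
  exact aux_rank_submatrix_le _ _ _

/-- If there is a surjection between the induced vertex sets that transports adjacency,
the `F_2`-ranks agree. -/
private lemma rankIn_eq_of_surj {V : Type u} {W : Type u} [Fintype V] [Fintype W]
    (G : SimpleGraph V) (H : SimpleGraph W) (S : Finset V) (T : Finset W)
    (f : {x // x ∈ S} → {y // y ∈ T}) (hf : Function.Surjective f)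
    (hAdj : ∀ x y : {x // x ∈ S}, G.Adj x.1 y.1 ↔ H.Adj (f x).1 (f y).1) :
    rankIn G S = rankIn H T := by
  classical
  unfold rankIn
  letI : DecidableRel G.Adj := Classical.decRel G.Adj
  letI : DecidableRel H.Adj := Classical.decRel H.Adj
  have hM : ((SimpleGraph.adjMatrix (ZMod 2) G).submatrix
        (fun i : S => (i : V)) (fun i : S => (i : V)))
      = (((SimpleGraph.adjMatrix (ZMod 2) H).submatrix
        (fun i : T => (i : W)) (fun i : T => (i : W))).submatrix f f) := by
    ext a b
    simp only [Matrix.submatrix_apply, SimpleGraph.adjMatrix_apply]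
    exact if_congr (hAdj a b) rfl rfl
  rw [hM]
  exact aux_rank_submatrix_surj _ f hf

private lemma rankIn_le_card {V : Type u} [Fintype V] (G : SimpleGraph V) (S : Finset V) :
    rankIn G S ≤ S.card := by
  classical
  unfold rankIn
  simpa [Fintype.card_coe] using
    Matrix.rank_le_card_width ((SimpleGraph.adjMatrix (ZMod 2) G).submatrix
      (fun i : S => (i : V)) (fun i : S => (i : V)))

private lemma addFalseTwin_adj_getD {V : Type u} (G : SimpleGraph V) (v : V)
    (x y : Option V) :
    (addFalseTwin G v).Adj x y ↔ G.Adj (x.getD v) (y.getD v) := by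
  cases x <;> cases y <;>
    simp [addFalseTwin, SimpleGraph.fromRel_adj, G.adj_comm] <;>
    aesop

end AuxLemmas

/-- If `G''` results from adding a false twin `w` of a non-isolated vertex `v` of a
loopless graph `G`, then `q(G'';x,y) = q(G;x,y) + y·(q(G;x,y) - q(G - v;x,y))`. -/
theorem interlaceQ_addFalseTwin {V : Type u} [Fintype V] [DecidableEq V]
    (G : SimpleGraph V) (v : V) (hv : ∃ x, G.Adj v x) :
    interlaceQ (addFalseTwin G v) =
      interlaceQ G + MvPolynomial.X 1 * (interlaceQ G - interlaceQ (delVert G v)) := by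
  classical
  -- term functions
  let tG : Finset V → MvPolynomial (Fin 2) ℤ := fun T =>
    (MvPolynomial.X 0 - 1) ^ (rankIn G T) * (MvPolynomial.X 1 - 1) ^ (T.card - rankIn G T)
  let F : Finset (Option V) → MvPolynomial (Fin 2) ℤ := fun S =>
    (MvPolynomial.X 0 - 1) ^ (rankIn (addFalseTwin G v) S)
      * (MvPolynomial.X 1 - 1) ^ (S.card - rankIn (addFalseTwin G v) S)
  -- membership helpers
  have memA : ∀ (T : Finset V) (x : Option V),
      x ∈ T.map Function.Embedding.some → x.getD v ∈ T := by
    intro T x hx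
    rcases Finset.mem_map.1 hx with ⟨a, ha, rfl⟩
    simpa using ha
  -- rank computations
  have hrank_map : ∀ T : Finset V,
      rankIn (addFalseTwin G v) (T.map Function.Embedding.some) = rankIn G T := by
    intro T
    refine rankIn_eq_of_surj _ G _ T (fun x => ⟨x.1.getD v, memA T x.1 x.2⟩) ?_
      (fun x y => addFalseTwin_adj_getD G v x.1 y.1)
    rintro ⟨a, ha⟩
    exact ⟨⟨some a, Finset.mem_map_of_mem _ ha⟩, rfl⟩
  have hrank_ins_mem : ∀ T : Finset V, v ∈ T →
      rankIn (addFalseTwin G v) (insert none (T.map Function.Embedding.some)) = rankIn G T := by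
    intro T hvT
    have memB : ∀ x : Option V, x ∈ insert none (T.map Function.Embedding.some) →
        x.getD v ∈ T := by
      intro x hx
      rcases Finset.mem_insert.1 hx with rfl | hx
      · simpa using hvT
      · exact memA T x hx
    refine rankIn_eq_of_surj _ G _ T (fun x => ⟨x.1.getD v, memB x.1 x.2⟩) ?_
      (fun x y => addFalseTwin_adj_getD G v x.1 y.1)
    rintro ⟨a, ha⟩
    exact ⟨⟨some a, Finset.mem_insert_of_mem (Finset.mem_map_of_mem _ ha)⟩, rfl⟩
  have hrank_ins_not : ∀ T : Finset V,
      rankIn (addFalseTwin G v) (insert none (T.map Function.Embedding.some))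
        = rankIn G (insert v T) := by
    intro T
    have memC : ∀ x : Option V, x ∈ insert none (T.map Function.Embedding.some) →
        x.getD v ∈ insert v T := by
      intro x hx
      rcases Finset.mem_insert.1 hx with rfl | hx
      · simp
      · exact Finset.mem_insert_of_mem (memA T x hx)
    refine rankIn_eq_of_surj _ G _ (insert v T) (fun x => ⟨x.1.getD v, memC x.1 x.2⟩) ?_
      (fun x y => addFalseTwin_adj_getD G v x.1 y.1)
    rintro ⟨a, ha⟩
    rcases Finset.mem_insert.1 ha with rfl | ha
    · exact ⟨⟨none, Finset.mem_insert_self _ _⟩, rfl⟩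
    · exact ⟨⟨some a, Finset.mem_insert_of_mem (Finset.mem_map_of_mem _ ha)⟩, rfl⟩
  have hrank_del : ∀ T' : Finset {x : V // x ≠ v},
      rankIn (delVert G v) T' = rankIn G (T'.map (Function.Embedding.subtype _)) := by
    intro T'
    refine rankIn_eq_of_surj (delVert G v) G T' _
      (fun x => ⟨x.1.1, Finset.mem_map_of_mem _ x.2⟩) ?_ ?_
    · rintro ⟨y, hy⟩
      rcases Finset.mem_map.1 hy with ⟨a, ha, rfl⟩
      exact ⟨⟨a, ha⟩, rfl⟩
    · intro a b
      exact Iff.rfl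
  -- the two parts of interlaceQ G
  set D := ∑ T ∈ Finset.univ.filter (fun T : Finset V => v ∈ T), tG T with hDdef
  set E := ∑ T ∈ Finset.univ.filter (fun T : Finset V => ¬ v ∈ T), tG T with hEdef
  have hG : interlaceQ G = D + E := by
    rw [hDdef, hEdef, Finset.sum_filter_add_sum_filter_not]
    rfl
  have hDel : interlaceQ (delVert G v) = E := by
    rw [hEdef]
    refine Finset.sum_nbij' (fun T' : Finset {x : V // x ≠ v} =>
        T'.map (Function.Embedding.subtype _)) (fun T => T.subtype _) ?_ ?_ ?_ ?_ ?_
    · intro T' _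
      simp only [Finset.mem_filter, Finset.mem_univ, true_and]
      intro hv'
      rcases Finset.mem_map.1 hv' with ⟨a, _, ha⟩
      exact a.2 ha
    · intro T _; exact Finset.mem_univ _
    · intro T' _
      ext a
      simp only [Finset.mem_subtype, Finset.mem_map, Function.Embedding.coe_subtype]
      constructor
      · rintro ⟨b, hb, hba⟩
        rwa [← Subtype.ext hba.symm] at hb
      · intro ha
        exact ⟨a, ha, rfl⟩
    · intro T hT
      have hvT : ¬ v ∈ T := (Finset.mem_filter.1 hT).2
      exact Finset.subtype_map_of_mem (fun x hx => by rintro rfl; exact hvT hx)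
    · intro T' _
      show _ = tG _
      simp only [tG, hrank_del T', Finset.card_map]
  -- the "none ∉ S" part
  have hnotnone : ∑ S ∈ Finset.univ.filter
        (fun S : Finset (Option V) => ¬ none ∈ S), F S = D + E := by
    rw [hDdef, hEdef, Finset.sum_filter_add_sum_filter_not]
    refine (Finset.sum_nbij' (fun T : Finset V => T.map Function.Embedding.some)
      Finset.eraseNone ?_ ?_ ?_ ?_ ?_).symm
    · intro T _
      simp only [Finset.mem_filter, Finset.mem_univ, true_and]
      intro h
      rcases Finset.mem_map.1 h with ⟨a, _, ha⟩
      exact Option.some_ne_none a ha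
    · intro S _; exact Finset.mem_univ _
    · intro T _; exact Finset.eraseNone_map_some T
    · intro S hS
      show Finset.map Function.Embedding.some (Finset.eraseNone S) = S
      rw [Finset.map_some_eraseNone, Finset.erase_eq_of_notMem]
      exact (Finset.mem_filter.1 hS).2
    · intro T _
      show tG T = F _
      simp only [tG, F, hrank_map T, Finset.card_map]
  -- the "none ∈ S" part
  have hnone : ∑ S ∈ Finset.univ.filter (fun S : Finset (Option V) => none ∈ S), F S
      = ∑ T : Finset V, F (insert none (T.map Function.Embedding.some)) := by
    refine (Finset.sum_nbij' (fun T : Finset V => insert none (T.map Function.Embedding.some))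
      Finset.eraseNone ?_ ?_ ?_ ?_ ?_).symm
    · intro T _
      simp [Finset.mem_filter]
    · intro S _; exact Finset.mem_univ _
    · intro T _
      have h1 : Finset.eraseNone (insert none (T.map Function.Embedding.some))
          = Finset.eraseNone (T.map Function.Embedding.some) := by
        ext a
        simp [Finset.mem_eraseNone]
      rw [h1, Finset.eraseNone_map_some]
    · intro S hS
      show insert none (Finset.map Function.Embedding.some (Finset.eraseNone S)) = S
      rw [Finset.map_some_eraseNone, Finset.insert_erase (Finset.mem_filter.1 hS).2]
    · intro T _; rfl
  have hsplit2 : ∑ T : Finset V, F (insert none (T.map Function.Embedding.some))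
      = (MvPolynomial.X 1 - 1) * D + D := by
    rw [← Finset.sum_filter_add_sum_filter_not Finset.univ (fun T : Finset V => v ∈ T)]
    congr 1
    · -- v ∈ T part
      rw [hDdef, Finset.mul_sum]
      refine Finset.sum_congr rfl ?_
      intro T hT
      have hvT : v ∈ T := (Finset.mem_filter.1 hT).2
      have h1 := hrank_ins_mem T hvT
      have h2 : (insert none (T.map Function.Embedding.some)).card = T.card + 1 := by
        rw [Finset.card_insert_of_notMem, Finset.card_map]
        intro h
        rcases Finset.mem_map.1 h with ⟨a, _, ha⟩
        exact Option.some_ne_none a ha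
      have hle := rankIn_le_card G T
      have h3 : T.card + 1 - rankIn G T = (T.card - rankIn G T) + 1 := by omega
      show F _ = _
      simp only [F, tG, h1, h2, h3, pow_succ]
      ring
    · -- v ∉ T part
      rw [hDdef]
      refine Finset.sum_nbij' (fun T : Finset V => insert v T) (fun T => T.erase v) ?_ ?_ ?_ ?_ ?_
      · intro T hT
        simp [Finset.mem_filter]
      · intro T hT
        simp [Finset.mem_filter]
      · intro T hT
        exact Finset.erase_insert (Finset.mem_filter.1 hT).2
      · intro T hT
        exact Finset.insert_erase (Finset.mem_filter.1 hT).2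
      · intro T hT
        have hvT : ¬ v ∈ T := (Finset.mem_filter.1 hT).2
        have h1 := hrank_ins_not T
        have h2 : (insert none (T.map Function.Embedding.some)).card = (insert v T).card := by
          rw [Finset.card_insert_of_notMem hvT, Finset.card_insert_of_notMem, Finset.card_map]
          intro h
          rcases Finset.mem_map.1 h with ⟨a, _, ha⟩
          exact Option.some_ne_none a ha
        show F _ = tG _
        simp only [F, tG, h1, h2]
  have hmain : interlaceQ (addFalseTwin G v)
      = ((MvPolynomial.X 1 - 1) * D + D) + (D + E) := by
    have h0 : interlaceQ (addFalseTwin G v) = ∑ S : Finset (Option V), F S := rfl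
    rw [h0, ← Finset.sum_filter_add_sum_filter_not Finset.univ
      (fun S : Finset (Option V) => none ∈ S) F, hnotnone, hnone, hsplit2]
  rw [hmain, hG, hDel]
  ring
end
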